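/- arXiv:2602.23267 — 5 statements merged into one kernel-verified Lean document; each statement's English description precedes it below -/
import Mathlib

section
/- Let k ≥ 2 and s ≥ 0 be integers. Then there exists S ∈ ℕ (one may take S = k·s²) such that for every finite set F ⊂ ℤ with |F| ≥ S there exist m ≥ 1 and a residue t with 0 ≤ t < k^m such that |F ∩ (t + k^m ℤ)| ≥ s and |F \ (t + k^m ℤ)| ≥ s. -/
/-!
Let `f m` be the size of the largest class of `F` modulo `k ^ m`. Then `f 0 = |F|`, `f m ≤ 1`
for large `m`, and `f m ≤ k * f (m + 1)`, since a class modulo `k ^ m` splits into `k` classes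
modulo `k ^ (m + 1)`. At the first `m ≥ 1` with `f m ≤ |F| - s`, the previous value is at least
`|F| - s ≥ k * s`, so `f m ≥ s`: a largest class modulo `k ^ m` has at least `s` elements of `F`
inside it and at least `s` outside it.
-/

open Finset

namespace ResidueClass

def classCard (F : Finset ℤ) (n t : ℤ) : ℕ :=
  (F.filter fun x => n ∣ x - t).card

noncomputable def maxClassCard (F : Finset ℤ) (n : ℤ) : ℕ :=
  (Ico 0 n).sup (classCard F n)

variable (F : Finset ℤ) {n : ℤ}

lemma classCard_emod (t : ℤ) : classCard F n (t % n) = classCard F n t := by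
  unfold classCard
  congr 1
  refine filter_congr fun x _ => ?_
  rw [← Int.modEq_iff_dvd, ← Int.modEq_iff_dvd]
  exact ⟨(Int.mod_modEq t n).symm.trans, (Int.mod_modEq t n).trans⟩

lemma classCard_le_maxClassCard (hn : 0 < n) (t : ℤ) : classCard F n t ≤ maxClassCard F n := by
  rw [← classCard_emod]
  exact le_sup (mem_Ico.mpr ⟨Int.emod_nonneg t hn.ne', Int.emod_lt_of_pos t hn⟩)

lemma exists_classCard_eq_maxClassCard (hn : 0 < n) :
    ∃ t, 0 ≤ t ∧ t < n ∧ classCard F n t = maxClassCard F n := by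
  obtain ⟨t, ht, hmax⟩ := exists_mem_eq_sup (Ico 0 n) ⟨0, mem_Ico.mpr ⟨le_rfl, hn⟩⟩ (classCard F n)
  exact ⟨t, (mem_Ico.mp ht).1, (mem_Ico.mp ht).2, hmax.symm⟩

lemma maxClassCard_one : maxClassCard F 1 = F.card := by
  rw [maxClassCard, show Ico (0 : ℤ) 1 = {0} by decide, sup_singleton, classCard]
  simp

lemma maxClassCard_le_card : maxClassCard F n ≤ F.card :=
  Finset.sup_le fun _ _ => card_filter_le _ _

/-- A class modulo `n` is the union of the `k` classes modulo `n * k` of `t + j * n`, `j < k`. -/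
lemma classCard_le_sum {k : ℕ} (hk : 0 < k) (t : ℤ) :
    classCard F n t ≤ ∑ j ∈ range k, classCard F (n * k) (t + j * n) := by
  refine (card_le_card fun y hy => ?_).trans card_biUnion_le
  obtain ⟨hyF, q, hq⟩ := mem_filter.mp hy
  have hk' : (0 : ℤ) < k := by exact_mod_cast hk
  obtain ⟨j, hj⟩ := Int.eq_ofNat_of_zero_le (Int.emod_nonneg q hk'.ne')
  have hjk : (j : ℤ) < k := hj ▸ Int.emod_lt_of_pos q hk'
  refine mem_biUnion.mpr ⟨j, mem_range.mpr (by exact_mod_cast hjk), mem_filter.mpr ⟨hyF, q / k, ?_⟩⟩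
  linear_combination hq - n * Int.mul_ediv_add_emod q k + n * hj

lemma maxClassCard_le_mul {k : ℕ} (hk : 0 < k) (hn : 0 < n) :
    maxClassCard F n ≤ k * maxClassCard F (n * k) := by
  have hnk : 0 < n * k := mul_pos hn (by exact_mod_cast hk)
  refine Finset.sup_le fun t _ => (classCard_le_sum F hk t).trans ?_
  calc ∑ j ∈ range k, classCard F (n * k) (t + j * n)
      ≤ ∑ _j ∈ range k, maxClassCard F (n * k) :=
        sum_le_sum fun j _ => classCard_le_maxClassCard F hnk _
    _ = k * maxClassCard F (n * k) := by rw [sum_const, card_range, smul_eq_mul]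

lemma maxClassCard_le_one {B : ℤ} (hB : ∀ x ∈ F, |x| ≤ B) (hn : 2 * B < n) :
    maxClassCard F n ≤ 1 := by
  refine Finset.sup_le fun t _ => card_le_one.mpr fun y hy z hz => ?_
  obtain ⟨hyF, hyt⟩ := mem_filter.mp hy
  obtain ⟨hzF, hzt⟩ := mem_filter.mp hz
  have hyz : |y - z| < n := by
    linarith [abs_sub y z, hB y hyF, hB z hzF]
  have hdvd : n ∣ y - z := by simpa using dvd_sub hyt hzt
  exact sub_eq_zero.mp (Int.eq_zero_of_abs_lt_dvd hdvd hyz)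

lemma eventually_maxClassCard_pow_le_one {k : ℕ} (hk : 1 < k) :
    ∀ᶠ m in Filter.atTop, maxClassCard F ((k : ℤ) ^ m) ≤ 1 := by
  obtain ⟨B, hB⟩ := (F.image abs).bddAbove
  have hk' : (1 : ℤ) < k := by exact_mod_cast hk
  filter_upwards [(tendsto_pow_atTop_atTop_of_one_lt hk').eventually_gt_atTop (2 * B)] with m hm
  exact maxClassCard_le_one F (fun x hx => hB (mem_image_of_mem _ hx)) hm

end ResidueClass

lemma exists_pos_le_and_add_le {f : ℕ → ℕ} {k s : ℕ} (hk : 0 < k) (h0 : (k + 1) * s ≤ f 0)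
    (hstep : ∀ m, f m ≤ k * f (m + 1)) (hsmall : ∃ m, f (m + 1) + s ≤ f 0) :
    ∃ m, 0 < m ∧ s ≤ f m ∧ f m + s ≤ f 0 := by
  classical
  set n := Nat.find hsmall
  have hprev : f 0 ≤ f n + s := by
    rcases hn : n with _ | n'
    · omega
    · have := Nat.find_min hsmall (show n' < n by omega)
      omega
  refine ⟨n + 1, n.succ_pos, ?_, Nat.find_spec hsmall⟩
  refine Nat.le_of_mul_le_mul_left ?_ hk
  linarith [hstep n]

open ResidueClass in
/-- For integers `k ≥ 2` and `s ≥ 0` there exists `S ∈ ℕ` such that every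
finite set `F ⊂ ℤ` with `|F| ≥ S` admits `m ≥ 1` and a residue `0 ≤ t < k^m` with
`|F ∩ (t + k^m ℤ)| ≥ s` and `|F \ (t + k^m ℤ)| ≥ s`. -/
theorem stmt0 (k s : ℕ) (hk : 2 ≤ k) :
    ∃ S : ℕ, ∀ F : Finset ℤ, S ≤ F.card →
      ∃ m : ℕ, 1 ≤ m ∧ ∃ t : ℤ, 0 ≤ t ∧ t < (k : ℤ) ^ m ∧
        s ≤ (F.filter (fun x => ((k : ℤ) ^ m ∣ x - t))).card ∧
        s ≤ (F.filter (fun x => ¬ ((k : ℤ) ^ m ∣ x - t))).card := by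
  refine ⟨(k + 1) * s, fun F hF => ?_⟩
  set f : ℕ → ℕ := fun m => maxClassCard F ((k : ℤ) ^ m)
  have hpow : ∀ m, (0 : ℤ) < (k : ℤ) ^ m := fun m => by positivity
  have hf0 : f 0 = F.card := by simp only [f, pow_zero, maxClassCard_one]
  have hstep : ∀ m, f m ≤ k * f (m + 1) := fun m => by
    simpa only [f, pow_succ] using maxClassCard_le_mul F (by omega) (hpow m)
  have hsmall : ∃ m, f (m + 1) + s ≤ f 0 := by
    obtain ⟨N, hN⟩ := Filter.eventually_atTop.mp (eventually_maxClassCard_pow_le_one F hk)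
    have h2s : 2 * s ≤ (k + 1) * s := Nat.mul_le_mul_right s (by omega)
    have hcard : f (N + 1) ≤ F.card := maxClassCard_le_card F
    exact ⟨N, by linarith [hN (N + 1) (by omega)]⟩
  obtain ⟨m, hm, hsm, hms⟩ := exists_pos_le_and_add_le (by omega) (hf0 ▸ hF) hstep hsmall
  obtain ⟨t, ht0, htn, ht⟩ := exists_classCard_eq_maxClassCard F (hpow m)
  have hsplit := card_filter_add_card_filter_not (s := F) (p := fun x => (k : ℤ) ^ m ∣ x - t)
  refine ⟨m, hm, t, ht0, htn, ?_, ?_⟩ <;> simp only [f, classCard] at ht hsm hms hf0 <;> omega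
end

section
/- Let φ : A → A^k be a substitution of constant length k ≥ 2 over a finite alphabet A, and let φ_s be its discrepancy substitution. Then for all distinct letters a, b ∈ A and all n ∈ ℕ, the length of (φ_s)^n({a,b}) equals the number of indices 0 ≤ i < k^n at which the words φ^n(a) and φ^n(b) differ. -/
/-!
Write `u ⊖ v` (`diffPairs u v`) for the word of pairs `{u_i, v_i}` over the positions where
two words of equal length differ. By definition `φ_s({a,b}) = φ(a) ⊖ φ(b)`, and since `φ` has
constant length, applying `φ` letterwise to `u` and `v` aligns the blocks `φ(u_i)` and `φ(v_i)`,
so that `φ_s(u ⊖ v) = φ(u) ⊖ φ(v)` (blocks with `u_i = v_i` contribute nothing). By induction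
`(φ_s)^n({a,b}) = φ^n(a) ⊖ φ^n(b)`, whose length is the number of positions where
`φ^n(a)` and `φ^n(b)` differ.
-/

variable {A : Type*}

/-- A substitution `φ : A → A^*` extended to finite words by concatenation. -/
def subExt (φ : A → List A) (w : List A) : List A := w.flatMap φ

/-- Composition of substitutions: `(φ ∘ τ)(a) = φ(τ(a))`. -/
def subComp (φ τ : A → List A) : A → List A := fun a => subExt φ (τ a)

/-- The `n`-th power `φ^n` of a substitution. -/
def subPow (φ : A → List A) : ℕ → A → List A
  | 0 => fun a => [a]
  | n + 1 => subComp φ (subPow φ n)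

/-- The discrepancy substitution `φ_s` of `φ`, defined on unordered pairs of letters:
`φ_s({a,b})` is the word, over the alphabet of unordered pairs, obtained by concatenating
the pairs `{φ(a)_i, φ(b)_i}` over those positions `i` where `φ(a)_i ≠ φ(b)_i`. -/
def discrep [DecidableEq A] (φ : A → List A) : Sym2 A → List (Sym2 A) :=
  Sym2.lift ⟨fun a b => ((φ a).zip (φ b)).filterMap
      (fun p => if p.1 ≠ p.2 then some (Sym2.mk p.1 p.2) else none),
    by
      intro a b
      show List.filterMap _ ((φ a).zip (φ b)) = List.filterMap _ ((φ b).zip (φ a))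
      rw [← List.zip_swap (φ a) (φ b), List.filterMap_map]
      congr 1
      funext p
      obtain ⟨x, y⟩ := p
      by_cases h : x = y
      · simp [h]
      · simp only [Function.comp_apply, Prod.swap_prod_mk]
        rw [if_pos (by simp [h]), if_pos (by simp [Ne.symm h])]
        all_goals exact congrArg some (Sym2.eq_swap ▸ rfl)⟩

def diffPairs [DecidableEq A] (u v : List A) : List (Sym2 A) :=
  (u.zip v).filterMap (fun p => if p.1 ≠ p.2 then some (Sym2.mk p.1 p.2) else none)

section diffPairs

variable [DecidableEq A]

lemma discrep_mk (φ : A → List A) (x y : A) :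
    discrep φ (Sym2.mk x y) = diffPairs (φ x) (φ y) := rfl

@[simp]
lemma diffPairs_nil_left (v : List A) : diffPairs [] v = [] := rfl

lemma diffPairs_cons (x y : A) (u v : List A) :
    diffPairs (x :: u) (y :: v) =
      (if x ≠ y then [Sym2.mk x y] else []) ++ diffPairs u v := by
  by_cases h : x = y <;> simp [diffPairs, h]

@[simp]
lemma diffPairs_self (u : List A) : diffPairs u u = [] := by
  induction u with
  | nil => rfl
  | cons x u ih => simp [diffPairs_cons, ih]

lemma diffPairs_append {u₁ v₁ : List A} (h : u₁.length = v₁.length) (u₂ v₂ : List A) :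
    diffPairs (u₁ ++ u₂) (v₁ ++ v₂) = diffPairs u₁ v₁ ++ diffPairs u₂ v₂ := by
  simp only [diffPairs, List.zip_append h, List.filterMap_append]

lemma length_diffPairs (d : A) {u v : List A} (h : u.length = v.length) :
    (diffPairs u v).length =
      ((Finset.range u.length).filter (fun i => u.getD i d ≠ v.getD i d)).card := by
  induction u generalizing v with
  | nil => simp
  | cons x u ih =>
    obtain _ | ⟨y, v⟩ := v
    · simp at h
    · rw [diffPairs_cons, List.length_append, ih (Nat.succ_inj.mp h), List.length_cons,
        Finset.card_filter, Finset.card_filter, Finset.sum_range_succ']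
      by_cases hxy : x = y <;> simp [hxy, add_comm]

end diffPairs

section ConstantLength

variable {k : ℕ} {φ : A → List A}

lemma subExt_cons (φ : A → List A) (x : A) (u : List A) :
    subExt φ (x :: u) = φ x ++ subExt φ u := List.flatMap_cons

lemma length_subExt (hφ : ∀ a, (φ a).length = k) (w : List A) :
    (subExt φ w).length = k * w.length := by
  induction w with
  | nil => rfl
  | cons x w ih => rw [subExt_cons, List.length_append, hφ, ih, List.length_cons]; ring

lemma length_subPow (hφ : ∀ a, (φ a).length = k) (n : ℕ) (a : A) :
    (subPow φ n a).length = k ^ n := by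
  induction n with
  | zero => rfl
  | succ n ih =>
    change (subExt φ (subPow φ n a)).length = _
    rw [length_subExt hφ, ih, pow_succ, mul_comm]

variable [DecidableEq A]

lemma subExt_discrep_diffPairs (hφ : ∀ a, (φ a).length = k) {u v : List A}
    (h : u.length = v.length) :
    subExt (discrep φ) (diffPairs u v) = diffPairs (subExt φ u) (subExt φ v) := by
  induction u generalizing v with
  | nil => obtain rfl := List.eq_nil_of_length_eq_zero h.symm; rfl
  | cons x u ih =>
    obtain _ | ⟨y, v⟩ := v
    · simp at h
    · rw [diffPairs_cons, subExt_cons, subExt_cons,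
        diffPairs_append (by rw [hφ, hφ]), ← ih (Nat.succ_inj.mp h)]
      by_cases hxy : x = y
      · subst hxy
        simp [subExt]
      · simp [hxy, subExt, discrep_mk]

lemma subPow_discrep_mk (hφ : ∀ a, (φ a).length = k) {a b : A} (hab : a ≠ b) (n : ℕ) :
    subPow (discrep φ) n (Sym2.mk a b) = diffPairs (subPow φ n a) (subPow φ n b) := by
  induction n with
  | zero => simp [subPow, diffPairs_cons, hab]
  | succ n ih =>
    change subExt (discrep φ) (subPow (discrep φ) n (Sym2.mk a b)) = _
    rw [ih, subExt_discrep_diffPairs hφ (by rw [length_subPow hφ, length_subPow hφ])]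
    rfl

end ConstantLength

theorem stmt2_general [DecidableEq A] (k : ℕ) (φ : A → List A)
    (hφ : ∀ a, (φ a).length = k) (a b : A) (hab : a ≠ b) (n : ℕ) :
    (subPow (discrep φ) n (Sym2.mk a b)).length =
      ((Finset.range (k ^ n)).filter
        (fun i => (subPow φ n a).getD i a ≠ (subPow φ n b).getD i a)).card := by
  rw [subPow_discrep_mk hφ hab n,
    length_diffPairs a (by rw [length_subPow hφ, length_subPow hφ]), length_subPow hφ]

/-- For a substitution `φ` of constant length `k ≥ 2`, distinct letters
`a, b` and `n ∈ ℕ`, the length of `(φ_s)^n({a,b})` equals the number of indices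
`0 ≤ i < k^n` at which the words `φ^n(a)` and `φ^n(b)` differ. -/
theorem stmt2 [DecidableEq A] (k : ℕ) (hk : 2 ≤ k) (φ : A → List A)
    (hφ : ∀ a, (φ a).length = k) (a b : A) (hab : a ≠ b) (n : ℕ) :
    (subPow (discrep φ) n (Sym2.mk a b)).length =
      ((Finset.range (k ^ n)).filter
        (fun i => (subPow φ n a).getD i a ≠ (subPow φ n b).getD i a)).card :=
  stmt2_general k φ hφ a b hab n
end

section
/- For every nonnegative real square matrix M with dominant eigenvalue λ, there exists d ∈ ℕ and constants c, C > 0 such that c · λ^n · n^d ≤ ‖M^n‖₁ ≤ C · λ^n · n^d for all sufficiently large n, where ‖·‖₁ denotes the maximum column sum. In particular ‖M^n‖₁ = Θ(λ^n n^d). -/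
/-!
Let `a n` be the sum of all entries of `M ^ n`. It lies between `‖M ^ n‖₁` and
`card m * ‖M ^ n‖₁`, it is submultiplicative, and `l ^ n ≤ ‖M ^ n‖₁` since `l` is an eigenvalue.
Decomposing the all-ones vector into generalized eigenvectors writes `a n`, for large `n`, as an
exponential polynomial `∑ Q_μ(n) μ ^ n` over eigenvalues `μ`, all with `‖μ‖ ≤ l`.

For `l > 0` put `t n = a n / l ^ n ≥ 1`, and let `d` be the largest degree of the nonzero `Q_μ`
with `‖μ‖ = l`. Then `t n / n ^ d` is, up to `o(1)`, a trigonometric polynomial `∑ c_ω ω ^ n`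
with distinct unimodular frequencies and some `c_ω ≠ 0`. Because `t n / n ^ d ≥ 0`, Cesàro means
show that `c_1` is real and dominates every `‖c_ω‖`, so `c_1 > 0`. Hence `t n / n ^ d` is bounded
above, and is at least `c_1 / 2` somewhere in every window of a fixed length `W`; by
submultiplicativity `t n ≥ t (n + k) / t k` with `k < W`, so `t n ≳ n ^ d` for all large `n`.
-/

/-- The maximum column sum norm `‖M‖₁` of a square matrix. -/
noncomputable def maxColSum {m : Type*} [Fintype m] [Nonempty m]
    (M : Matrix m m ℝ) : ℝ :=
  Finset.univ.sup' Finset.univ_nonempty (fun j => ∑ i, |M i j|)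

open Filter Topology Polynomial Finset

namespace Polynomial

lemma exists_eval_mul_pow_eq_sum_choose {K : Type*} [Field K] [CharZero K] (β : ℕ → K)
    {μ : K} (hμ : μ ≠ 0) (r : ℕ) :
    ∃ Q : K[X], ∀ n : ℕ,
      Q.eval (n : K) * μ ^ n = ∑ k ∈ range r, (n.choose k : K) * μ ^ (n - k) * β k := by
  -- `descPochhammer K k / k!` takes the value `n.choose k` at `n`
  refine ⟨∑ k ∈ range r, C (β k * μ⁻¹ ^ k / k.factorial) * descPochhammer K k, fun n => ?_⟩
  rw [eval_finsetSum, sum_mul]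
  refine sum_congr rfl fun k _ => ?_
  rw [eval_mul, eval_C, descPochhammer_eval_eq_descFactorial]
  rcases le_or_gt k n with hkn | hnk
  · have hpow : μ⁻¹ ^ k * μ ^ n = μ ^ (n - k) := by
      rw [pow_sub₀ _ hμ hkn, inv_pow, mul_comm]
    rw [Nat.descFactorial_eq_factorial_mul_choose, ← hpow]
    have : (k.factorial : K) ≠ 0 := Nat.cast_ne_zero.mpr k.factorial_ne_zero
    push_cast
    field_simp
  · simp [Nat.descFactorial_eq_zero_iff_lt.mpr hnk, Nat.choose_eq_zero_of_lt hnk]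

variable {𝕜 : Type*} [RCLike 𝕜]

lemma tendsto_eval_div_pow (P : 𝕜[X]) {d : ℕ} (hd : P.natDegree ≤ d) :
    Tendsto (fun n : ℕ => P.eval (n : 𝕜) / (n : 𝕜) ^ d) atTop (𝓝 (P.coeff d)) := by
  have hlim : Tendsto (fun n : ℕ => ∑ j ∈ range (d + 1), P.coeff j * ((n : 𝕜)⁻¹) ^ (d - j))
      atTop (𝓝 (∑ j ∈ range (d + 1), P.coeff j * 0 ^ (d - j))) :=
    tendsto_finsetSum _ fun j _ => (tendsto_inv_atTop_nhds_zero_nat.pow _).const_mul _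
  rw [sum_range_succ, Nat.sub_self, pow_zero, mul_one,
    sum_eq_zero fun j hj => by rw [zero_pow (by simp at hj; omega), mul_zero], zero_add] at hlim
  refine hlim.congr' ?_
  filter_upwards [eventually_ne_atTop 0] with n hn
  have hn' : (n : 𝕜) ≠ 0 := Nat.cast_ne_zero.mpr hn
  rw [eval_eq_sum_range' (Nat.lt_succ_of_le hd), sum_div]
  refine sum_congr rfl fun j hj => ?_
  rw [inv_pow, pow_sub₀ _ hn' (Nat.le_of_lt_succ (mem_range.mp hj)), mul_inv, inv_inv]
  ring

lemma tendsto_eval_mul_pow (P : 𝕜[X]) {ρ : 𝕜} (hρ : ‖ρ‖ < 1) :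
    Tendsto (fun n : ℕ => P.eval (n : 𝕜) * ρ ^ n) atTop (𝓝 0) := by
  simp_rw [eval_eq_sum_range, sum_mul]
  rw [← sum_const_zero (s := range (P.natDegree + 1))]
  refine tendsto_finsetSum _ fun j _ => ?_
  have hlim := (tendsto_pow_const_mul_const_pow_of_abs_lt_one j (r := ‖ρ‖)
    (by rwa [abs_norm])).const_mul ‖P.coeff j‖
  rw [mul_zero] at hlim
  refine squeeze_zero_norm (fun n => ?_) hlim
  simp [mul_assoc]

end Polynomial

namespace Module.End

variable {K V : Type*} [Field K] [AddCommGroup V] [Module K V]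

lemma exists_apply_pow_eq_eval_mul_pow [CharZero K] (f : End K V) (φ : V →ₗ[K] K) {μ : K}
    {r : ℕ} {w : V} (hw : w ∈ f.genEigenspace μ r) :
    ∃ Q : K[X], ∀ n, r ≤ n → φ ((f ^ n) w) = Q.eval (n : K) * μ ^ n := by
  set g := f - μ • 1
  have hgw : ∀ k, r ≤ k → (g ^ k) w = 0 := fun k hk => by
    rw [← Nat.sub_add_cancel hk, pow_add, mul_apply, mem_genEigenspace_nat.mp hw, map_zero]
  rcases eq_or_ne μ 0 with rfl | hμ
  · exact ⟨0, fun n hn => by simpa [g] using congrArg φ (hgw n hn)⟩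
  obtain ⟨Q, hQ⟩ := exists_eval_mul_pow_eq_sum_choose (fun k => φ ((g ^ k) w)) hμ r
  refine ⟨Q, fun n hn => ?_⟩
  have hcomm : Commute g (μ • 1) := (Commute.one_right g).smul_right μ
  have hexpand : (f ^ n) w = ∑ k ∈ range (n + 1), (n.choose k * μ ^ (n - k)) • (g ^ k) w := by
    rw [← sub_add_cancel f (μ • 1), hcomm.add_pow, LinearMap.sum_apply]
    refine sum_congr rfl fun k _ => ?_
    simp [_root_.smul_pow, mul_smul, mul_comm, Nat.cast_smul_eq_nsmul]
  have htail : ∑ k ∈ Ico r (n + 1), (n.choose k * μ ^ (n - k) : K) • (g ^ k) w = 0 :=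
    sum_eq_zero fun k hk => by rw [hgw k (mem_Ico.mp hk).1, smul_zero]
  rw [hQ, hexpand, ← sum_range_add_sum_Ico _ (by omega : r ≤ n + 1), htail, add_zero, map_sum]
  simp [mul_assoc]

theorem exists_apply_pow_eq_sum_eval_mul_pow [CharZero K] [IsAlgClosed K] [FiniteDimensional K V]
    (f : End K V) (φ : V →ₗ[K] K) (v : V) :
    ∃ (S : Finset K) (Q : K → K[X]), (∀ μ ∈ S, f.HasEigenvalue μ) ∧
      ∀ n, Module.finrank K V ≤ n → φ ((f ^ n) v) = ∑ μ ∈ S, (Q μ).eval (n : K) * μ ^ n := by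
  classical
  have hv : v ∈ ⨆ μ, f.maxGenEigenspace μ := by rw [iSup_maxGenEigenspace_eq_top]; trivial
  obtain ⟨s, hs⟩ := Submodule.exists_finset_of_mem_iSup _ hv
  obtain ⟨w, hwv⟩ := (Submodule.mem_iSup_finset_iff_exists_sum _ _).mp hs
  have hw : ∀ μ, (w μ : V) ∈ f.genEigenspace μ (Module.finrank K V) := fun μ => by
    rw [← maxGenEigenspace_eq_genEigenspace_finrank]; exact (w μ).2
  choose Q hQ using fun μ => exists_apply_pow_eq_eval_mul_pow f φ (hw μ)
  refine ⟨s.filter fun μ => (w μ : V) ≠ 0, Q, fun μ hμ => ?_, fun n hn => ?_⟩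
  · exact hasEigenvalue_of_hasGenEigenvalue (k := Module.finrank K V)
      (hasGenEigenvalue_iff.mpr ((Submodule.ne_bot_iff _).mpr ⟨w μ, hw μ, (mem_filter.mp hμ).2⟩))
  · have hzero : ∀ μ ∈ s, φ ((f ^ n) (w μ)) ≠ 0 → (w μ : V) ≠ 0 := fun μ _ h hw0 =>
      h (by rw [hw0, map_zero, map_zero])
    rw [← hwv, map_sum, map_sum, ← sum_filter_of_ne hzero]
    exact sum_congr rfl fun μ _ => hQ μ n hn

end Module.End

lemma norm_sum_range_pow_sub_le {ω : ℂ} (hω : ‖ω‖ = 1) (n W : ℕ) :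
    ‖∑ k ∈ range W, ω ^ (n + k) - if ω = 1 then (W : ℂ) else 0‖ ≤ 2 / ‖ω - 1‖ := by
  split_ifs with h
  -- for `ω = 1` both sides vanish, the right one because `2 / 0 = 0`
  · simp [h]
  have hω1 : 0 < ‖ω - 1‖ := norm_pos_iff.mpr (sub_ne_zero.mpr h)
  simp_rw [sub_zero, pow_add, ← mul_sum, geom_sum_eq h, norm_mul, norm_div, norm_pow, hω,
    one_pow, one_mul]
  gcongr
  calc ‖ω ^ W - 1‖ ≤ ‖ω ^ W‖ + ‖(1 : ℂ)‖ := norm_sub_le _ _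
    _ = 2 := by rw [norm_pow, hω, one_pow, norm_one]; norm_num

lemma tendsto_avg_pow {ω : ℂ} (hω : ‖ω‖ = 1) :
    Tendsto (fun n : ℕ => (n : ℝ)⁻¹ • ∑ k ∈ range n, ω ^ k) atTop
      (𝓝 (if ω = 1 then 1 else 0)) := by
  rw [← tendsto_sub_nhds_zero_iff]
  have hlim := (tendsto_inv_atTop_nhds_zero_nat (𝕜 := ℝ)).mul_const (2 / ‖ω - 1‖)
  rw [zero_mul] at hlim
  refine squeeze_zero_norm' ?_ hlim
  filter_upwards [eventually_ne_atTop 0] with n hn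
  have hsplit : (n : ℝ)⁻¹ • ∑ k ∈ range n, ω ^ k - (if ω = 1 then 1 else 0)
      = (n : ℝ)⁻¹ • (∑ k ∈ range n, ω ^ (0 + k) - if ω = 1 then (n : ℂ) else 0) := by
    split_ifs <;> simp [smul_sub, hn]
  rw [hsplit, norm_smul, norm_inv, Real.norm_natCast]
  exact mul_le_mul_of_nonneg_left (norm_sum_range_pow_sub_le hω 0 n) (by positivity)

section TrigonometricPolynomial

variable {F : Finset ℂ} (c : ℂ → ℂ)

lemma tendsto_avg_mul_inv_pow (hF : ∀ ω ∈ F, ‖ω‖ = 1) {s : ℕ → ℂ}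
    (hs : Tendsto (fun n => s n - ∑ ω ∈ F, c ω * ω ^ n) atTop (𝓝 0)) {ν : ℂ} (hν : ‖ν‖ = 1) :
    Tendsto (fun n : ℕ => (n : ℝ)⁻¹ • ∑ k ∈ range n, s k * ν⁻¹ ^ k) atTop
      (𝓝 (if ν ∈ F then c ν else 0)) := by
  have hν0 : ν ≠ 0 := norm_ne_zero_iff.mp (by rw [hν]; exact one_ne_zero)
  have hsplit : ∀ n : ℕ, (n : ℝ)⁻¹ • ∑ k ∈ range n, s k * ν⁻¹ ^ k
      = ∑ ω ∈ F, c ω * ((n : ℝ)⁻¹ • ∑ k ∈ range n, (ω * ν⁻¹) ^ k)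
        + (n : ℝ)⁻¹ • ∑ k ∈ range n, (s k - ∑ ω ∈ F, c ω * ω ^ k) * ν⁻¹ ^ k := by
    intro n
    simp_rw [mul_smul_comm, ← smul_sum, ← smul_add, mul_sum, sub_mul, sum_sub_distrib, sum_mul]
    rw [sum_comm (s := F)]
    simp [mul_pow, mul_assoc]
  have hlim : (if ν ∈ F then c ν else 0)
      = ∑ ω ∈ F, c ω * (if ω * ν⁻¹ = 1 then 1 else 0) + 0 := by
    simp_rw [mul_inv_eq_one₀ hν0, mul_ite, mul_one, mul_zero, add_zero, sum_ite_eq']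
  rw [funext hsplit, hlim]
  refine (tendsto_finsetSum F fun ω hω => (tendsto_avg_pow ?_).const_mul (c ω)).add ?_
  · rw [norm_mul, norm_inv, hF ω hω, hν, inv_one, one_mul]
  · refine Tendsto.cesaro_smul <| squeeze_zero_norm (fun k => le_of_eq ?_)
      (tendsto_zero_iff_norm_tendsto_zero.mp hs)
    rw [norm_mul, norm_pow, norm_inv, hν, inv_one, one_pow, mul_one]

lemma exists_coeff_one_eq_real_ge_norm (hF : ∀ ω ∈ F, ‖ω‖ = 1) {s : ℕ → ℝ} (hs0 : ∀ n, 0 ≤ s n)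
    (hs : Tendsto (fun n => (s n : ℂ) - ∑ ω ∈ F, c ω * ω ^ n) atTop (𝓝 0)) :
    ∃ g : ℝ, (g : ℂ) = (if 1 ∈ F then c 1 else 0) ∧ ∀ ν ∈ F, ‖c ν‖ ≤ g := by
  set avg : ℕ → ℝ := fun n => (n : ℝ)⁻¹ * ∑ k ∈ range n, s k
  have hmean : Tendsto (fun n => (avg n : ℂ)) atTop (𝓝 (if 1 ∈ F then c 1 else 0)) := by
    refine (tendsto_avg_mul_inv_pow c hF hs norm_one).congr fun n => ?_
    simp [avg, Complex.real_smul]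
  have hre : Tendsto avg atTop (𝓝 (if 1 ∈ F then c 1 else 0).re) := by
    simpa [Function.comp_def] using (Complex.continuous_re.tendsto _).comp hmean
  refine ⟨_, tendsto_nhds_unique ((Complex.continuous_ofReal.tendsto _).comp hre) hmean,
    fun ν hν => ?_⟩
  have htwist := tendsto_avg_mul_inv_pow c hF hs (hF ν hν)
  rw [if_pos hν] at htwist
  refine le_of_tendsto_of_tendsto' htwist.norm hre fun n => ?_
  rw [norm_smul, norm_inv, Real.norm_natCast]
  refine mul_le_mul_of_nonneg_left ((norm_sum_le _ _).trans (le_of_eq ?_)) (by positivity)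
  refine sum_congr rfl fun k _ => ?_
  rw [norm_mul, norm_pow, norm_inv, hF ν hν, inv_one, one_pow, mul_one, Complex.norm_real,
    Real.norm_of_nonneg (hs0 k)]

lemma exists_window_half_le (hF : ∀ ω ∈ F, ‖ω‖ = 1) {s : ℕ → ℝ}
    (hs : Tendsto (fun n => (s n : ℂ) - ∑ ω ∈ F, c ω * ω ^ n) atTop (𝓝 0)) {g : ℝ} (hg : 0 < g)
    (h1 : 1 ∈ F) (hc1 : c 1 = g) :
    ∃ W : ℕ, ∀ᶠ n in atTop, ∃ k < W, g / 2 ≤ s (n + k) := by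
  set B := ∑ ω ∈ F, ‖c ω‖ * (2 / ‖ω - 1‖)
  have hwindow : ∀ n W : ℕ, ‖∑ k ∈ range W, ∑ ω ∈ F, c ω * ω ^ (n + k) - W * g‖ ≤ B := by
    intro n W
    have hsplit : ∑ k ∈ range W, ∑ ω ∈ F, c ω * ω ^ (n + k) - W * g
        = ∑ ω ∈ F, c ω * (∑ k ∈ range W, ω ^ (n + k) - if ω = 1 then (W : ℂ) else 0) := by
      simp_rw [mul_sub, sum_sub_distrib, mul_ite, mul_zero, sum_ite_eq', if_pos h1, hc1, mul_sum]
      rw [sum_comm, mul_comm]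
    rw [hsplit]
    refine (norm_sum_le _ _).trans (sum_le_sum fun ω hω => ?_)
    rw [norm_mul]
    exact mul_le_mul_of_nonneg_left (norm_sum_range_pow_sub_le (hF ω hω) n W) (norm_nonneg _)
  obtain ⟨W, hW⟩ := exists_nat_gt (4 * B / g)
  obtain ⟨N, hN⟩ := eventually_atTop.mp
    ((tendsto_zero_iff_norm_tendsto_zero.mp hs).eventually
      (gt_mem_nhds (by positivity : 0 < g / 4)))
  refine ⟨W, ?_⟩
  filter_upwards [eventually_ge_atTop N] with n hn
  by_contra! hsmall
  have hupper : ∑ k ∈ range W, s (n + k) ≤ W * (g / 2) := by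
    simpa using sum_le_card_nsmul _ _ _ fun k hk => (hsmall k (mem_range.mp hk)).le
  have hclose : |∑ k ∈ range W, s (n + k) - W * g| ≤ B + W * (g / 4) := by
    have herr : ‖∑ k ∈ range W, ((s (n + k) : ℂ) - ∑ ω ∈ F, c ω * ω ^ (n + k))‖ ≤ W * (g / 4) := by
      simpa using (norm_sum_le (range W) _).trans
        (sum_le_card_nsmul _ _ _ fun k _ => (hN (n + k) (by omega)).le)
    rw [← Real.norm_eq_abs, ← Complex.norm_real]
    push_cast
    calc _ = ‖(∑ k ∈ range W, ∑ ω ∈ F, c ω * ω ^ (n + k) - W * g)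
          + ∑ k ∈ range W, ((s (n + k) : ℂ) - ∑ ω ∈ F, c ω * ω ^ (n + k))‖ := by
            rw [sum_sub_distrib]; ring_nf
      _ ≤ B + W * (g / 4) := (norm_add_le _ _).trans (add_le_add (hwindow n W) herr)
  have hWB : W * g ≤ 4 * B := by linarith [(abs_le.mp hclose).1]
  rw [div_lt_iff₀ hg] at hW
  linarith

lemma eventually_le_sum_norm_add_one (hF : ∀ ω ∈ F, ‖ω‖ = 1) {s : ℕ → ℝ}
    (hs : Tendsto (fun n => (s n : ℂ) - ∑ ω ∈ F, c ω * ω ^ n) atTop (𝓝 0)) :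
    ∀ᶠ n in atTop, s n ≤ ∑ ω ∈ F, ‖c ω‖ + 1 := by
  filter_upwards [(tendsto_zero_iff_norm_tendsto_zero.mp hs).eventually (gt_mem_nhds one_pos)]
    with n hn
  have hp : ‖∑ ω ∈ F, c ω * ω ^ n‖ ≤ ∑ ω ∈ F, ‖c ω‖ := (norm_sum_le _ _).trans (le_of_eq
    (sum_congr rfl fun ω hω => by rw [norm_mul, norm_pow, hF ω hω, one_pow, mul_one]))
  calc s n ≤ ‖(s n : ℂ)‖ := by rw [Complex.norm_real]; exact le_abs_self _
    _ ≤ ‖∑ ω ∈ F, c ω * ω ^ n‖ + ‖(s n : ℂ) - ∑ ω ∈ F, c ω * ω ^ n‖ := norm_le_insert' _ _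
    _ ≤ ∑ ω ∈ F, ‖c ω‖ + 1 := add_le_add hp hn.le

end TrigonometricPolynomial

lemma tendsto_sub_sum_peripheral {x : ℕ → ℂ} {R : Finset ℂ} (hR : ∀ ρ ∈ R, ‖ρ‖ ≤ 1)
    (P : ℂ → ℂ[X]) (hx : ∀ᶠ n in atTop, x n = ∑ ρ ∈ R, (P ρ).eval (n : ℂ) * ρ ^ n) :
    Tendsto (fun n => x n - ∑ ω ∈ R with ‖ω‖ = 1 ∧ P ω ≠ 0, (P ω).eval (n : ℂ) * ω ^ n)
      atTop (𝓝 0) := by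
  have hrest : Tendsto (fun n : ℕ => ∑ ρ ∈ R with ¬(‖ρ‖ = 1 ∧ P ρ ≠ 0), (P ρ).eval (n : ℂ) * ρ ^ n)
      atTop (𝓝 0) := by
    have hterm : ∀ ρ ∈ R.filter fun ρ => ¬(‖ρ‖ = 1 ∧ P ρ ≠ 0),
        Tendsto (fun n : ℕ => (P ρ).eval (n : ℂ) * ρ ^ n) atTop (𝓝 0) := by
      intro ρ hρ
      obtain ⟨hρR, hρ⟩ := mem_filter.mp hρ
      by_cases hP : P ρ = 0
      · simp [hP]
      · exact (P ρ).tendsto_eval_mul_pow ((hR ρ hρR).lt_of_ne fun h => hρ ⟨h, hP⟩)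
    simpa using tendsto_finsetSum _ hterm
  refine hrest.congr' ?_
  filter_upwards [hx] with n hn
  rw [hn, ← sum_filter_add_sum_filter_not R fun ρ => ‖ρ‖ = 1 ∧ P ρ ≠ 0]
  ring

lemma tendsto_div_pow_sub_sum_coeff {x : ℕ → ℂ} {F : Finset ℂ} (hF : ∀ ω ∈ F, ‖ω‖ = 1)
    (q : ℂ → ℂ[X]) {d : ℕ} (hd : ∀ ω ∈ F, (q ω).natDegree ≤ d)
    (hx : Tendsto (fun n => x n - ∑ ω ∈ F, (q ω).eval (n : ℂ) * ω ^ n) atTop (𝓝 0)) :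
    Tendsto (fun n : ℕ => x n / (n : ℂ) ^ d - ∑ ω ∈ F, (q ω).coeff d * ω ^ n) atTop (𝓝 0) := by
  have hterm : ∀ ω ∈ F, Tendsto (fun n : ℕ =>
      ((q ω).eval (n : ℂ) / (n : ℂ) ^ d - (q ω).coeff d) * ω ^ n) atTop (𝓝 0) := by
    intro ω hω
    refine squeeze_zero_norm (fun n => le_of_eq ?_) (tendsto_zero_iff_norm_tendsto_zero.mp
      (tendsto_sub_nhds_zero_iff.mpr ((q ω).tendsto_eval_div_pow (hd ω hω))))
    rw [norm_mul, norm_pow, hF ω hω, one_pow, mul_one]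
  have hlim := (hx.mul (tendsto_inv_atTop_nhds_zero_nat.pow d)).add (tendsto_finsetSum F hterm)
  rw [zero_mul, sum_const_zero, add_zero] at hlim
  refine hlim.congr fun n => ?_
  have hsum : ∑ ω ∈ F, ((q ω).eval (n : ℂ) / (n : ℂ) ^ d - (q ω).coeff d) * ω ^ n
      = (∑ ω ∈ F, (q ω).eval (n : ℂ) * ω ^ n) / (n : ℂ) ^ d - ∑ ω ∈ F, (q ω).coeff d * ω ^ n := by
    rw [sum_div, ← sum_sub_distrib]
    exact sum_congr rfl fun ω _ => by ring
  rw [hsum, inv_pow]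
  ring

lemma exists_mul_pow_le_of_window {t : ℕ → ℝ} (ht : ∀ n, 0 ≤ t n)
    (hsub : ∀ p q, t (p + q) ≤ t p * t q) {a : ℝ} (ha : 0 < a) {d W : ℕ}
    (hwin : ∀ᶠ n : ℕ in atTop, ∃ k < W, a * (n : ℝ) ^ d ≤ t (n + k)) :
    ∃ c > 0, ∀ᶠ n : ℕ in atTop, c * (n : ℝ) ^ d ≤ t n := by
  set T := ∑ k ∈ range W, t k + 1
  have hT : 0 < T := by linarith [sum_nonneg fun k (_ : k ∈ range W) => ht k]
  refine ⟨a / T, div_pos ha hT, ?_⟩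
  filter_upwards [hwin] with n ⟨k, hk, hnk⟩
  have htk : t k ≤ T := (single_le_sum (fun i _ => ht i) (mem_range.mpr hk)).trans (by simp [T])
  rw [div_mul_eq_mul_div, div_le_iff₀ hT]
  calc a * (n : ℝ) ^ d ≤ t (n + k) := hnk
    _ ≤ t n * t k := hsub n k
    _ ≤ t n * T := mul_le_mul_of_nonneg_left htk (ht n)

lemma exists_pow_bounds_of_tendsto_div_pow {t : ℕ → ℝ} (ht : ∀ n, 0 ≤ t n)
    (hsub : ∀ p q, t (p + q) ≤ t p * t q) {F : Finset ℂ} (hF : ∀ ω ∈ F, ‖ω‖ = 1) (c : ℂ → ℂ)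
    (hc : ∃ ω ∈ F, c ω ≠ 0) {d : ℕ}
    (hs : Tendsto (fun n : ℕ => ((t n / (n : ℝ) ^ d : ℝ) : ℂ) - ∑ ω ∈ F, c ω * ω ^ n)
      atTop (𝓝 0)) :
    ∃ c C : ℝ, 0 < c ∧ 0 < C ∧
      ∀ᶠ n : ℕ in atTop, c * (n : ℝ) ^ d ≤ t n ∧ t n ≤ C * (n : ℝ) ^ d := by
  obtain ⟨ω₀, hω₀, hcω₀⟩ := hc
  obtain ⟨g, hg, hcg⟩ :=
    exists_coeff_one_eq_real_ge_norm c hF (fun n => div_nonneg (ht n) (by positivity)) hs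
  have hgpos : 0 < g := (norm_pos_iff.mpr hcω₀).trans_le (hcg ω₀ hω₀)
  have h1 : 1 ∈ F := by
    by_contra h
    rw [if_neg h, Complex.ofReal_eq_zero] at hg
    exact hgpos.ne' hg
  rw [if_pos h1] at hg
  obtain ⟨W, hW⟩ := exists_window_half_le c hF hs hgpos h1 hg.symm
  obtain ⟨c₀, hc₀, hlow⟩ := exists_mul_pow_le_of_window ht hsub (half_pos hgpos) (d := d) <| by
    filter_upwards [hW, eventually_ge_atTop 1] with n ⟨k, hk, hnk⟩ hn
    refine ⟨k, hk, ?_⟩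
    calc g / 2 * (n : ℝ) ^ d ≤ g / 2 * ((n + k : ℕ) : ℝ) ^ d := by gcongr; omega
      _ ≤ t (n + k) / ((n + k : ℕ) : ℝ) ^ d * ((n + k : ℕ) : ℝ) ^ d := by gcongr
      _ = t (n + k) := div_mul_cancel₀ _ (by positivity)
  refine ⟨c₀, ∑ ω ∈ F, ‖c ω‖ + 1, hc₀, by positivity, ?_⟩
  filter_upwards [hlow, eventually_le_sum_norm_add_one c hF hs, eventually_ge_atTop 1]
    with n hlow hup hn
  refine ⟨hlow, ?_⟩
  calc t n = t n / (n : ℝ) ^ d * (n : ℝ) ^ d := (div_mul_cancel₀ _ (by positivity)).symm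
    _ ≤ _ := by gcongr

theorem exists_pow_bounds_of_submultiplicative {t : ℕ → ℝ} (ht : ∀ n, 1 ≤ t n)
    (hsub : ∀ p q, t (p + q) ≤ t p * t q) {R : Finset ℂ} (hR : ∀ ρ ∈ R, ‖ρ‖ ≤ 1) (P : ℂ → ℂ[X])
    (hexp : ∀ᶠ n in atTop, (t n : ℂ) = ∑ ρ ∈ R, (P ρ).eval (n : ℂ) * ρ ^ n) :
    ∃ d : ℕ, ∃ c C : ℝ, 0 < c ∧ 0 < C ∧
      ∀ᶠ n : ℕ in atTop, c * (n : ℝ) ^ d ≤ t n ∧ t n ≤ C * (n : ℝ) ^ d := by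
  have hper := tendsto_sub_sum_peripheral hR P hexp
  set F := R.filter fun ω => ‖ω‖ = 1 ∧ P ω ≠ 0
  have hFne : F.Nonempty := by
    rw [nonempty_iff_ne_empty]
    intro hempty
    rw [hempty] at hper
    obtain ⟨n, hn⟩ := ((tendsto_zero_iff_norm_tendsto_zero.mp hper).eventually
      (gt_mem_nhds one_pos)).exists
    rw [sum_empty, sub_zero, Complex.norm_real, Real.norm_of_nonneg (zero_le_one.trans (ht n))]
      at hn
    exact (ht n).not_gt hn
  obtain ⟨ω₀, hω₀, hdeg⟩ := exists_mem_eq_sup' hFne fun ω => (P ω).natDegree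
  set d := F.sup' hFne fun ω => (P ω).natDegree
  refine ⟨d, exists_pow_bounds_of_tendsto_div_pow (fun n => zero_le_one.trans (ht n)) hsub
    (fun ω hω => (mem_filter.mp hω).2.1) (fun ω => (P ω).coeff d) ⟨ω₀, hω₀, ?_⟩ ?_⟩
  · rw [hdeg]
    exact leadingCoeff_ne_zero.mpr (mem_filter.mp hω₀).2.2
  · push_cast
    exact tendsto_div_pow_sub_sum_coeff (fun ω hω => (mem_filter.mp hω).2.1) P
      (fun ω hω => le_sup' (fun ω => (P ω).natDegree) hω) hper

lemma sum_eval_mul_pow_div_pow {S : Finset ℂ} (Q : ℂ → ℂ[X]) {l : ℂ} (hl : l ≠ 0) (n : ℕ) :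
    (∑ μ ∈ S, (Q μ).eval (n : ℂ) * μ ^ n) / l ^ n
      = ∑ ρ ∈ S.image (· / l), (Q (ρ * l)).eval (n : ℂ) * ρ ^ n := by
  rw [sum_image fun _ _ _ _ h => (div_left_inj' hl).mp h, sum_div]
  exact sum_congr rfl fun μ _ => by rw [div_mul_cancel₀ μ hl, div_pow, mul_div_assoc]

namespace Matrix

variable {m : Type*} [Fintype m]

def entrySum (A : Matrix m m ℝ) : ℝ := ∑ i, ∑ j, A i j

lemma entrySum_eq_sum_colSum (A : Matrix m m ℝ) : entrySum A = ∑ j, ∑ i, A i j := sum_comm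

lemma colSum_le_entrySum {A : Matrix m m ℝ} (hA : ∀ i j, 0 ≤ A i j) (j : m) :
    ∑ i, A i j ≤ entrySum A := by
  rw [entrySum_eq_sum_colSum]
  exact single_le_sum (fun k _ => sum_nonneg fun i _ => hA i k) (mem_univ j)

lemma entrySum_mul_le {A B : Matrix m m ℝ} (hA : ∀ i j, 0 ≤ A i j) (hB : ∀ i j, 0 ≤ B i j) :
    entrySum (A * B) ≤ entrySum A * entrySum B := by
  calc entrySum (A * B) = ∑ i, ∑ k, A i k * ∑ j, B k j := by
        simp only [entrySum, mul_apply, mul_sum]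
        exact sum_congr rfl fun i _ => sum_comm
    _ = ∑ k, (∑ i, A i k) * ∑ j, B k j := by rw [sum_comm]; simp only [sum_mul]
    _ ≤ ∑ k, entrySum A * ∑ j, B k j := sum_le_sum fun k _ =>
        mul_le_mul_of_nonneg_right (colSum_le_entrySum hA k) (sum_nonneg fun j _ => hB k j)
    _ = entrySum A * entrySum B := by rw [← mul_sum]; rfl

lemma maxColSum_le_entrySum [Nonempty m] {A : Matrix m m ℝ} (hA : ∀ i j, 0 ≤ A i j) :
    maxColSum A ≤ entrySum A :=
  sup'_le _ _ fun j _ => by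
    simpa only [abs_of_nonneg (hA _ j)] using colSum_le_entrySum hA j

lemma entrySum_le_card_mul_maxColSum [Nonempty m] (A : Matrix m m ℝ) :
    entrySum A ≤ Fintype.card m * maxColSum A := by
  rw [entrySum_eq_sum_colSum, ← nsmul_eq_mul, ← card_univ]
  refine sum_le_card_nsmul _ _ _ fun j _ => ?_
  exact (sum_le_sum fun i _ => le_abs_self (A i j)).trans
    (le_sup' (fun j => ∑ i, |A i j|) (mem_univ j))

variable [DecidableEq m]

lemma map_ofReal_pow (M : Matrix m m ℝ) (n : ℕ) :
    M.map Complex.ofReal ^ n = (M ^ n).map Complex.ofReal :=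
  (M.map_pow Complex.ofRealHom n).symm

lemma exists_entrySum_pow_eq_sum (M : Matrix m m ℝ) :
    ∃ (S : Finset ℂ) (Q : ℂ → ℂ[X]), (∀ μ ∈ S, μ ∈ spectrum ℂ (M.map Complex.ofReal)) ∧
      ∀ᶠ n : ℕ in atTop, (entrySum (M ^ n) : ℂ) = ∑ μ ∈ S, (Q μ).eval (n : ℂ) * μ ^ n := by
  obtain ⟨S, Q, hS, hQ⟩ := Module.End.exists_apply_pow_eq_sum_eval_mul_pow
    (M.map Complex.ofReal).toLin' (∑ i, LinearMap.proj i) 1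
  refine ⟨S, Q, fun μ hμ => spectrum_toLin' (M.map Complex.ofReal) ▸ (hS μ hμ).mem_spectrum, ?_⟩
  filter_upwards [eventually_ge_atTop (Module.finrank ℂ (m → ℂ))] with n hn
  rw [← hQ n hn, ← toLin'_pow, map_ofReal_pow]
  simp [entrySum, mulVec, dotProduct]

lemma eventually_entrySum_pow_eq_zero {M : Matrix m m ℝ}
    (hM : ∀ μ ∈ spectrum ℂ (M.map Complex.ofReal), μ = 0) :
    ∀ᶠ n : ℕ in atTop, entrySum (M ^ n) = 0 := by
  obtain ⟨S, Q, hS, hexp⟩ := M.exists_entrySum_pow_eq_sum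
  filter_upwards [hexp, eventually_ne_atTop 0] with n hn hn0
  rw [sum_eq_zero fun μ hμ => by rw [hM μ (hS μ hμ), zero_pow hn0, mul_zero]] at hn
  exact_mod_cast hn

variable [Nonempty m]

lemma norm_le_maxColSum_of_hasEigenvalue (A : Matrix m m ℝ) {μ : ℂ}
    (hμ : Module.End.HasEigenvalue (A.map Complex.ofReal).toLin' μ) : ‖μ‖ ≤ maxColSum A := by
  obtain ⟨x, hx⟩ := hμ.exists_hasEigenvector
  have hAx : A.map Complex.ofReal *ᵥ x = μ • x := hx.apply_eq_smul
  have hx0 : 0 < ∑ j, ‖x j‖ := by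
    obtain ⟨j, hj⟩ := Function.ne_iff.mp hx.2
    exact sum_pos' (fun j _ => norm_nonneg _) ⟨j, mem_univ j, norm_pos_iff.mpr hj⟩
  refine le_of_mul_le_mul_right ?_ hx0
  calc ‖μ‖ * ∑ j, ‖x j‖ = ∑ i, ‖(A.map Complex.ofReal *ᵥ x) i‖ := by
        simp [hAx, mul_sum]
    _ ≤ ∑ i, ∑ j, |A i j| * ‖x j‖ := sum_le_sum fun i _ => by
        simpa [mulVec, dotProduct] using norm_sum_le univ fun j => (A i j : ℂ) * x j
    _ = ∑ j, (∑ i, |A i j|) * ‖x j‖ := by rw [sum_comm]; simp only [sum_mul]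
    _ ≤ ∑ j, maxColSum A * ‖x j‖ := sum_le_sum fun j _ => mul_le_mul_of_nonneg_right
        (le_sup' (fun j => ∑ i, |A i j|) (mem_univ j)) (norm_nonneg _)
    _ = maxColSum A * ∑ j, ‖x j‖ := by rw [mul_sum]

lemma pow_le_maxColSum_pow {M : Matrix m m ℝ} {l : ℝ} (hl : 0 ≤ l)
    (hmem : (l : ℂ) ∈ spectrum ℂ (M.map Complex.ofReal)) (n : ℕ) :
    l ^ n ≤ maxColSum (M ^ n) := by
  have h := (Module.End.HasEigenvalue.of_mem_spectrum
    ((spectrum_toLin' (M.map Complex.ofReal)).symm ▸ hmem)).pow n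
  rw [← toLin'_pow, map_ofReal_pow] at h
  simpa [abs_of_nonneg hl] using norm_le_maxColSum_of_hasEigenvalue (M ^ n) h

lemma exists_entrySum_pow_bounds {M : Matrix m m ℝ} (hM : ∀ i j, 0 ≤ M i j) {l : ℝ} (hl : 0 < l)
    (hmem : (l : ℂ) ∈ spectrum ℂ (M.map Complex.ofReal))
    (hmax : ∀ μ ∈ spectrum ℂ (M.map Complex.ofReal), ‖μ‖ ≤ l) :
    ∃ d : ℕ, ∃ c C : ℝ, 0 < c ∧ 0 < C ∧ ∀ᶠ n : ℕ in atTop,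
      c * l ^ n * (n : ℝ) ^ d ≤ entrySum (M ^ n) ∧ entrySum (M ^ n) ≤ C * l ^ n * (n : ℝ) ^ d := by
  obtain ⟨S, Q, hS, hexp⟩ := M.exists_entrySum_pow_eq_sum
  set t : ℕ → ℝ := fun n => entrySum (M ^ n) / l ^ n
  have ht : ∀ n, 1 ≤ t n := fun n => (one_le_div (by positivity)).mpr
    ((pow_le_maxColSum_pow hl.le hmem n).trans (maxColSum_le_entrySum (pow_apply_nonneg hM n)))
  have hsub : ∀ p q, t (p + q) ≤ t p * t q := fun p q => by
    simp only [t, pow_add, div_mul_div_comm]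
    exact div_le_div_of_nonneg_right
      (entrySum_mul_le (pow_apply_nonneg hM p) (pow_apply_nonneg hM q)) (by positivity)
  have hR : ∀ ρ ∈ S.image (· / (l : ℂ)), ‖ρ‖ ≤ 1 := by
    simp only [mem_image]
    rintro _ ⟨μ, hμ, rfl⟩
    rw [norm_div, Complex.norm_real, Real.norm_of_nonneg hl.le, div_le_one hl]
    exact hmax μ (hS μ hμ)
  have hexp' : ∀ᶠ n : ℕ in atTop,
      (t n : ℂ) = ∑ ρ ∈ S.image (· / (l : ℂ)), (Q (ρ * l)).eval (n : ℂ) * ρ ^ n := by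
    filter_upwards [hexp] with n hn
    rw [← sum_eval_mul_pow_div_pow Q (Complex.ofReal_ne_zero.mpr hl.ne'), ← hn]
    push_cast [t]
    rfl
  obtain ⟨d, c, C, hc, hC, hbounds⟩ := exists_pow_bounds_of_submultiplicative ht hsub hR _ hexp'
  refine ⟨d, c, C, hc, hC, ?_⟩
  filter_upwards [hbounds] with n ⟨hlo, hhi⟩
  rw [← div_mul_cancel₀ (entrySum (M ^ n)) (pow_pos hl n).ne', mul_right_comm c, mul_right_comm C]
  exact ⟨mul_le_mul_of_nonneg_right hlo (by positivity),
    mul_le_mul_of_nonneg_right hhi (by positivity)⟩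

end Matrix

/-- Let `M` be a nonnegative real square matrix and let `l` be its
dominant (Perron–Frobenius) eigenvalue, i.e. `l` is a (real, nonnegative) eigenvalue of
`M` dominating the absolute value of every complex eigenvalue of `M`.  Then there exist
`d ∈ ℕ` and constants `c, C > 0` with
`c · l^n · n^d ≤ ‖M^n‖₁ ≤ C · l^n · n^d` for all sufficiently large `n`. -/
theorem stmt9 {m : Type*} [Fintype m] [DecidableEq m] [Nonempty m]
    (M : Matrix m m ℝ) (hM : ∀ i j, 0 ≤ M i j) (l : ℝ) (hl : 0 ≤ l)
    (hmem : (l : ℂ) ∈ spectrum ℂ (M.map (Complex.ofReal)))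
    (hmax : ∀ μ ∈ spectrum ℂ (M.map (Complex.ofReal)), ‖μ‖ ≤ l) :
    ∃ d : ℕ, ∃ c C : ℝ, 0 < c ∧ 0 < C ∧ ∃ N : ℕ, ∀ n : ℕ, N ≤ n →
      c * l ^ n * (n : ℝ) ^ d ≤ maxColSum (M ^ n) ∧
      maxColSum (M ^ n) ≤ C * l ^ n * (n : ℝ) ^ d := by
  rcases hl.eq_or_lt with rfl | hlpos
  · have hnil := M.eventually_entrySum_pow_eq_zero fun μ hμ => norm_le_zero_iff.mp (hmax μ hμ)
    refine ⟨0, 1, 1, one_pos, one_pos, eventually_atTop.mp ?_⟩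
    filter_upwards [hnil, eventually_ne_atTop 0] with n hn hn0
    have hlow := Matrix.pow_le_maxColSum_pow le_rfl hmem n
    have hup := Matrix.maxColSum_le_entrySum (Matrix.pow_apply_nonneg hM n)
    rw [zero_pow hn0] at hlow
    rw [zero_pow hn0, mul_zero, zero_mul]
    exact ⟨hlow, hup.trans hn.le⟩
  · obtain ⟨d, c, C, hc, hC, hbounds⟩ := Matrix.exists_entrySum_pow_bounds hM hlpos hmem hmax
    refine ⟨d, c / Fintype.card m, C, by positivity, hC, eventually_atTop.mp ?_⟩
    filter_upwards [hbounds] with n ⟨hlo, hhi⟩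
    refine ⟨?_, (Matrix.maxColSum_le_entrySum (Matrix.pow_apply_nonneg hM n)).trans hhi⟩
    rw [div_mul_eq_mul_div, div_mul_eq_mul_div, div_le_iff₀ (by positivity),
      mul_comm (maxColSum _)]
    exact hlo.trans (M ^ n).entrySum_le_card_mul_maxColSum
end

section
/- Let (X,T) be a minimal subshift over a finite alphabet A. Then X is null if and only if there exists t ∈ ℕ such that for every x ∈ X, every pair of distinct letters a, b ∈ A, and every set G ⊂ ℤ with |G| = t, the set {a,b}^t is not contained in L(x,G), where L(x,G) = { (T^i x)|_G : i ∈ ℤ } is the set of patterns of x read along G. -/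
/-- The left shift by `i ∈ ℤ` on bi-infinite sequences: `(T^i x)_n = x_{n+i}`. -/
def shiftZ {A : Type*} (i : ℤ) (x : ℤ → A) : ℤ → A := fun n => x (n + i)

/-- `S ⊆ ℤ` is an independence set for the pair of sets `(U₀, U₁)` relative to `X`:
for every finite `G ⊆ S` and every choice function `σ : G → {0,1}` there is `x ∈ X`
with `T^i x ∈ U_{σ(i)}` for all `i ∈ G`. -/
def IsIndepSet {A : Type*} (X U₀ U₁ : Set (ℤ → A)) (S : Set ℤ) : Prop :=
  ∀ G : Finset ℤ, ↑G ⊆ S → ∀ σ : ℤ → Bool,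
    ∃ x ∈ X, ∀ i ∈ G, shiftZ i x ∈ (if σ i then U₁ else U₀)

/-- `(x₀, x₁)` is an IN pair for the subshift `X`: every pair of (ambient) open
neighbourhoods of `x₀` and `x₁` admits arbitrarily large finite independence sets. -/
def IsINPair {A : Type*} [TopologicalSpace A] (X : Set (ℤ → A)) (x₀ x₁ : ℤ → A) : Prop :=
  ∀ U₀ U₁ : Set (ℤ → A), IsOpen U₀ → IsOpen U₁ → x₀ ∈ U₀ → x₁ ∈ U₁ →
    ∀ t : ℕ, ∃ G : Finset ℤ, t ≤ G.card ∧ IsIndepSet X (U₀ ∩ X) (U₁ ∩ X) ↑G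

/-- A subshift is null if it has no nontrivial IN pairs. -/
def IsNullSystem {A : Type*} [TopologicalSpace A] (X : Set (ℤ → A)) : Prop :=
  ∀ x₀ ∈ X, ∀ x₁ ∈ X, IsINPair X x₀ x₁ → x₀ = x₁

/-!
If `x₀ ≠ x₁` is an IN pair and they differ at coordinate `n`, then the cylinders
`{y | y n = x₀ n}` and `{y | y n = x₁ n}` have independence sets of every size `t`: every
`{x₀ n, x₁ n}`-pattern along a translate of a `t`-set is realised by a point of `X`, and by
minimality the orbit of any point of `X` realises it as well.

Conversely, if full `{a, b}`-patterns occur along arbitrarily large sets, then by pigeonhole a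
single pair `a ≠ b` does, so the cylinders `{y | y 0 = a}` and `{y | y 0 = b}` have arbitrarily
large finite independence sets. Such a pair of sets can be refined to any finite window while
keeping this property, because if `(D₀, V ∪ V')` has arbitrarily large independence sets then so
has `(D₀, V)` or `(D₀, V')`; compactness then produces an IN pair `(x₀, x₁)` with
`x₀ 0 = a ≠ b = x₁ 0`. The splitting step is Ramsey's theorem: colour the increasing `t`-tuples of
a large independence set by patterns witnessing that they are independent neither for `(D₀, V)`
nor for `(D₀, V')`. On a homogeneous set a single pattern fails along every tuple, but one point
that visits `V ∪ V'` at `2t` well-spaced times and `D₀` at the times in between realises it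
along a suitable tuple.
-/

open Finset

section

variable {A : Type*}

section Shift

theorem shiftZ_shiftZ (i j : ℤ) (x : ℤ → A) : shiftZ i (shiftZ j x) = shiftZ (i + j) x := by
  funext n
  simp only [shiftZ, add_assoc]

@[simp]
theorem shiftZ_zero : shiftZ 0 = (id : (ℤ → A) → ℤ → A) := by
  funext x n
  simp [shiftZ]

theorem continuous_shiftZ [TopologicalSpace A] (i : ℤ) : Continuous (shiftZ (A := A) i) :=
  continuous_pi fun n => continuous_apply (n + i)

def shiftZHomeomorph [TopologicalSpace A] (i : ℤ) : (ℤ → A) ≃ₜ (ℤ → A) where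
  toFun := shiftZ i
  invFun := shiftZ (-i)
  left_inv x := by simp [shiftZ_shiftZ]
  right_inv x := by simp [shiftZ_shiftZ]
  continuous_toFun := continuous_shiftZ i
  continuous_invFun := continuous_shiftZ (-i)

theorem image_shiftZ_eq_self {X : Set (ℤ → A)} (hinv : shiftZ 1 '' X = X) (i : ℤ) :
    shiftZ i '' X = X := by
  have hcomp : ∀ i j : ℤ, shiftZ i '' (shiftZ j '' X) = shiftZ (i + j) '' X := fun i j => by
    simp only [Set.image_image, shiftZ_shiftZ]
  have hneg : shiftZ (-1) '' X = X := by
    conv_lhs => rw [← hinv]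
    simp [hcomp]
  induction i using Int.induction_on with
  | zero => simp
  | succ k ih => rw [add_comm, ← hcomp, ih, hinv]
  | pred k ih => rw [sub_eq_neg_add, ← hcomp, ih, hneg]

theorem shiftZ_mem {X : Set (ℤ → A)} (hinv : shiftZ 1 '' X = X) {x : ℤ → A} (hx : x ∈ X)
    (i : ℤ) : shiftZ i x ∈ X :=
  image_shiftZ_eq_self hinv i ▸ Set.mem_image_of_mem _ hx

end Shift

section Cylinder

def cylinder (F : Finset ℤ) (w : ℤ → A) : Set (ℤ → A) := F.restrict ⁻¹' {F.restrict w}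

theorem mem_cylinder {F : Finset ℤ} {w y : ℤ → A} : y ∈ cylinder F w ↔ ∀ i ∈ F, y i = w i := by
  simp [cylinder, funext_iff]

theorem self_mem_cylinder (F : Finset ℤ) (w : ℤ → A) : w ∈ cylinder F w := rfl

theorem cylinder_anti {F F' : Finset ℤ} (h : F ⊆ F') (w : ℤ → A) :
    cylinder F' w ⊆ cylinder F w := fun _ hy =>
  mem_cylinder.2 fun i hi => mem_cylinder.1 hy i (h hi)

theorem isOpen_cylinder [TopologicalSpace A] [DiscreteTopology A] (F : Finset ℤ) (w : ℤ → A) :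
    IsOpen (cylinder F w) :=
  (isOpen_discrete {F.restrict w}).preimage (Finset.continuous_restrict F)

theorem isClopen_setOf_apply_eq [TopologicalSpace A] [DiscreteTopology A] (n : ℤ) (a : A) :
    IsClopen {y : ℤ → A | y n = a} :=
  (isClopen_discrete {a}).preimage (continuous_apply n)

theorem exists_cylinder_subset [TopologicalSpace A] {U : Set (ℤ → A)} {x : ℤ → A} (hU : IsOpen U)
    (hx : x ∈ U) :
    ∃ F : Finset ℤ, cylinder F x ⊆ U := by
  obtain ⟨F, u, hu, hFU⟩ := isOpen_pi_iff.1 hU x hx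
  refine ⟨F, fun y hy => hFU fun i hi => ?_⟩
  rw [Finset.mem_coe] at hi
  rw [mem_cylinder.1 hy i hi]
  exact (hu i hi).2

end Cylinder

section Minimal

variable [TopologicalSpace A] [DiscreteTopology A] {X : Set (ℤ → A)}

theorem exists_shiftZ_mem_cylinder (hclosed : IsClosed X) (hinv : shiftZ 1 '' X = X)
    (hmin : ∀ Y : Set (ℤ → A), Y ⊆ X → IsClosed Y → shiftZ 1 '' Y = Y → Y = ∅ ∨ Y = X)
    {x y : ℤ → A} (hx : x ∈ X) (hy : y ∈ X) (F : Finset ℤ) :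
    ∃ i : ℤ, shiftZ i x ∈ cylinder F y := by
  set O := Set.range fun i : ℤ => shiftZ i x
  have hO : shiftZ 1 '' O = O := by
    rw [← Set.range_comp]
    simpa [Function.comp_def, shiftZ_shiftZ] using
      (Equiv.addLeft (1 : ℤ)).surjective.range_comp fun i => shiftZ i x
  have hinvO : shiftZ 1 '' closure O = closure O :=
    ((shiftZHomeomorph 1).image_closure O).trans (congrArg closure hO)
  have hOX : closure O = X :=
    (hmin _ (closure_minimal (Set.range_subset_iff.2 (shiftZ_mem hinv hx)) hclosed)
      isClosed_closure hinvO).resolve_left (Set.Nonempty.ne_empty ⟨x, subset_closure ⟨0, by simp⟩⟩)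
  obtain ⟨_, hmem, i, rfl⟩ :=
    mem_closure_iff.1 (hOX ▸ hy) _ (isOpen_cylinder F y) (self_mem_cylinder F y)
  exact ⟨i, hmem⟩

end Minimal

section Independence

variable {X D₀ D₁ E₀ E₁ : Set (ℤ → A)}

def IsIndepFinset (X D₀ D₁ : Set (ℤ → A)) (G : Finset ℤ) : Prop :=
  ∀ σ : ℤ → Bool, ∃ x ∈ X, ∀ i ∈ G, shiftZ i x ∈ if σ i then D₁ else D₀

def HasLargeIndepSets (X D₀ D₁ : Set (ℤ → A)) : Prop :=
  ∀ t : ℕ, ∃ G : Finset ℤ, t ≤ G.card ∧ IsIndepFinset X D₀ D₁ G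

theorem isIndepSet_coe_iff {G : Finset ℤ} :
    IsIndepSet X D₀ D₁ ↑G ↔ IsIndepFinset X D₀ D₁ G :=
  ⟨fun h => h G subset_rfl, fun h _ hG' σ =>
    let ⟨x, hx, hxG⟩ := h σ
    ⟨x, hx, fun i hi => hxG i (hG' hi)⟩⟩

theorem isINPair_iff [TopologicalSpace A] {x₀ x₁ : ℤ → A} :
    IsINPair X x₀ x₁ ↔ ∀ U₀ U₁ : Set (ℤ → A), IsOpen U₀ → IsOpen U₁ → x₀ ∈ U₀ → x₁ ∈ U₁ →
      HasLargeIndepSets X (U₀ ∩ X) (U₁ ∩ X) := by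
  simp only [IsINPair, HasLargeIndepSets, isIndepSet_coe_iff]

namespace IsIndepFinset

variable {G : Finset ℤ}

theorem subset (h : IsIndepFinset X D₀ D₁ G) {G' : Finset ℤ} (hG' : G' ⊆ G) :
    IsIndepFinset X D₀ D₁ G' := fun σ =>
  let ⟨x, hx, hxG⟩ := h σ
  ⟨x, hx, fun i hi => hxG i (hG' hi)⟩

theorem mono (h : IsIndepFinset X D₀ D₁ G) (h₀ : D₀ ⊆ E₀) (h₁ : D₁ ⊆ E₁) :
    IsIndepFinset X E₀ E₁ G := fun σ => by
  obtain ⟨x, hx, hxG⟩ := h σ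
  refine ⟨x, hx, fun i hi => ?_⟩
  have hxi := hxG i hi
  cases hσ : σ i <;> simp only [hσ, Bool.false_eq_true, if_true, if_false] at hxi ⊢
  exacts [h₀ hxi, h₁ hxi]

theorem symm (h : IsIndepFinset X D₀ D₁ G) : IsIndepFinset X D₁ D₀ G := fun σ => by
  obtain ⟨x, hx, hxG⟩ := h fun i => !σ i
  refine ⟨x, hx, fun i hi => ?_⟩
  cases hσ : σ i <;> simpa [hσ] using hxG i hi

end IsIndepFinset

namespace HasLargeIndepSets

theorem mono (h : HasLargeIndepSets X D₀ D₁) (h₀ : D₀ ⊆ E₀) (h₁ : D₁ ⊆ E₁) :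
    HasLargeIndepSets X E₀ E₁ := fun t =>
  let ⟨G, hG, hind⟩ := h t
  ⟨G, hG, hind.mono h₀ h₁⟩

theorem symm (h : HasLargeIndepSets X D₀ D₁) : HasLargeIndepSets X D₁ D₀ := fun t =>
  let ⟨G, hG, hind⟩ := h t
  ⟨G, hG, hind.symm⟩

theorem nonempty_right (h : HasLargeIndepSets X D₀ D₁) : D₁.Nonempty := by
  obtain ⟨G, hG, hind⟩ := h 1
  obtain ⟨i, hi⟩ := card_pos.1 hG
  obtain ⟨x, -, hx⟩ := hind fun _ => true
  exact ⟨_, by simpa using hx i hi⟩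

theorem nonempty_left (h : HasLargeIndepSets X D₀ D₁) : D₀.Nonempty :=
  h.symm.nonempty_right

end HasLargeIndepSets

end Independence

section Patterns

variable {X : Set (ℤ → A)}

/-- `{a, b}^G ⊆ L(x, G)`. -/
def HasAllPatternsAlong (x : ℤ → A) (a b : A) (G : Finset ℤ) : Prop :=
  ∀ u : ℤ → A, (∀ g ∈ G, u g = a ∨ u g = b) → ∃ i : ℤ, ∀ g ∈ G, x (i + g) = u g

theorem HasAllPatternsAlong.isIndepFinset (hinv : shiftZ 1 '' X = X) {x : ℤ → A} (hx : x ∈ X)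
    {a b : A} {G : Finset ℤ} (h : HasAllPatternsAlong x a b G) :
    IsIndepFinset X ({y | y 0 = a} ∩ X) ({y | y 0 = b} ∩ X) G := by
  intro σ
  obtain ⟨i, hi⟩ := h (fun g => if σ g then b else a) fun g _ => by cases σ g <;> simp
  refine ⟨shiftZ i x, shiftZ_mem hinv hx i, fun g hg => ?_⟩
  have hval : shiftZ g (shiftZ i x) 0 = if σ g then b else a := by
    simpa [shiftZ, add_comm g i] using hi g hg
  have hmem : shiftZ g (shiftZ i x) ∈ X := shiftZ_mem hinv (shiftZ_mem hinv hx i) g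
  cases hσ : σ g <;> simp only [hσ, Bool.false_eq_true, if_true, if_false] at hval ⊢
  exacts [⟨hval, hmem⟩, ⟨hval, hmem⟩]

theorem IsIndepFinset.exists_mem_pattern {n : ℤ} {a b : A} {G : Finset ℤ}
    (h : IsIndepFinset X {y | y n = a} {y | y n = b} G) (u : ℤ → A)
    (hu : ∀ g ∈ G, u g = a ∨ u g = b) : ∃ z ∈ X, ∀ g ∈ G, z (n + g) = u g := by
  classical
  obtain ⟨z, hz, hzG⟩ := h fun g => decide (u g = b)
  refine ⟨z, hz, fun g hg => ?_⟩
  have := hzG g hg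
  rcases hu g hg with hg' | hg' <;> by_cases hab : u g = b <;> simp_all [shiftZ]

end Patterns

section Ramsey

variable {α : Type*} [LinearOrder α]

def IsRamseyBound (α : Type*) [LinearOrder α] (t : ℕ) (κ : Type*) (N R : ℕ) : Prop :=
  ∀ (S : Finset α) (c : (Fin t → α) → κ), R ≤ S.card →
    ∃ T ⊆ S, N ≤ T.card ∧ ∃ k, ∀ g : Fin t → α, StrictMono g → (∀ j, g j ∈ T) → c g = k

theorem exists_prehomogeneous {t : ℕ} {κ : Type*} (ih : ∀ N, ∃ R, IsRamseyBound α t κ N R)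
    (m : ℕ) :
    ∃ R, ∀ (S : Finset α) (c : (Fin (t + 1) → α) → κ), R ≤ S.card →
      ∃ T ⊆ S, m ≤ T.card ∧ ∃ γ : α → κ,
        ∀ g : Fin (t + 1) → α, StrictMono g → (∀ j, g j ∈ T) → c g = γ (g 0) := by
  induction m with
  | zero =>
    exact ⟨0, fun S c _ => ⟨∅, empty_subset _, le_rfl, fun a => c fun _ => a,
      fun g _ hg => absurd (hg 0) (notMem_empty _)⟩⟩
  | succ m ihm =>
    obtain ⟨Rm, hRm⟩ := ihm
    obtain ⟨R, hR⟩ := ih Rm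
    refine ⟨R + 1, fun S c hS => ?_⟩
    have hSne : S.Nonempty := card_pos.1 (by omega)
    set a := S.min' hSne
    have ha : ∀ b ∈ S.erase a, a < b := fun b hb =>
      (S.min'_le b (mem_of_mem_erase hb)).lt_of_ne (ne_of_mem_erase hb).symm
    obtain ⟨T₁, hT₁, hRmT₁, k, hk⟩ := hR (S.erase a) (fun g => c (Fin.cons a g))
      (by rw [card_erase_of_mem (S.min'_mem hSne)]; omega)
    obtain ⟨T, hT, hmT, γ, hγ⟩ := hRm T₁ c hRmT₁
    have haT : a ∉ T := fun h => lt_irrefl a (ha a (hT₁ (hT h)))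
    refine ⟨insert a T, insert_subset (S.min'_mem hSne) ((hT.trans hT₁).trans (erase_subset _ _)),
      by rw [card_insert_of_notMem haT]; omega, Function.update γ a k, fun g hg hgT => ?_⟩
    have hne (j : Fin (t + 1)) (h0 : a < g j) : g j ∈ T :=
      (mem_insert.1 (hgT j)).resolve_left h0.ne'
    by_cases h0 : g 0 = a
    · have htail : ∀ j, Fin.tail g j ∈ T₁ := fun j =>
        hT (hne j.succ (h0 ▸ hg (Fin.succ_pos j)))
      rw [h0, Function.update_self, ← hk (Fin.tail g) (hg.comp Fin.strictMono_succ) htail, ← h0,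
        Fin.cons_self_tail]
    · have ha0 : a < g 0 := ha _ (hT₁ (hT ((mem_insert.1 (hgT 0)).resolve_left h0)))
      rw [Function.update_of_ne h0,
        hγ g hg fun j => hne j (ha0.trans_le (hg.monotone (Fin.zero_le j)))]

theorem exists_isRamseyBound (t : ℕ) (κ : Type*) [Finite κ] (N : ℕ) :
    ∃ R, IsRamseyBound α t κ N R := by
  induction t generalizing N with
  | zero =>
    exact ⟨N, fun S c hS => ⟨S, subset_rfl, hS, c Fin.elim0,
      fun g _ _ => congrArg c (Subsingleton.elim _ _)⟩⟩
  | succ t ih =>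
    classical
    have := Fintype.ofFinite κ
    obtain ⟨R, hR⟩ := exists_prehomogeneous ih (Fintype.card κ * N + 1)
    refine ⟨R, fun S c hS => ?_⟩
    obtain ⟨T, hTS, hT, γ, hγ⟩ := hR S c hS
    obtain ⟨k, -, hk⟩ := exists_lt_card_fiber_of_mul_lt_card_of_maps_to
      (fun a _ => mem_univ (γ a)) (by rw [card_univ]; omega : (univ : Finset κ).card * N < T.card)
    exact ⟨T.filter (γ · = k), (filter_subset _ _).trans hTS, hk.le, k, fun g hg hgT =>
      (hγ g hg fun j => (mem_filter.1 (hgT j)).1).trans (mem_filter.1 (hgT 0)).2⟩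

end Ramsey

theorem exists_strictMono_lex {m t : ℕ} (τ : Fin t → Bool) {B : Finset (Fin m)}
    (hB : t ≤ B.card) :
    ∃ h : Fin t → Fin m ×ₗ Fin (t + 1), StrictMono h ∧
      ∀ j, ((ofLex (h j)).2 = Fin.last t ↔ τ j) ∧ (τ j → (ofLex (h j)).1 ∈ B) := by
  classical
  let before (v : Bool) (j : Fin t) : ℕ := #{i | i < j ∧ τ i = v}
  have before_lt (v : Bool) (j : Fin t) : before v j < t :=
    (card_lt_univ_of_notMem (x := j) (by simp)).trans_eq (Fintype.card_fin t)
  have before_mono (v : Bool) {j j' : Fin t} (hjj' : j ≤ j') : before v j ≤ before v j' :=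
    card_le_card fun i hi => by
      simp only [mem_filter, mem_univ, true_and] at hi ⊢
      exact ⟨hi.1.trans_le hjj', hi.2⟩
  have before_strictMono {j j' : Fin t} (hjj' : j < j') : before (τ j) j < before (τ j) j' := by
    refine card_lt_card ⟨fun i hi => ?_, fun hsub => ?_⟩
    · simp only [mem_filter, mem_univ, true_and] at hi ⊢
      exact ⟨hi.1.trans hjj', hi.2⟩
    · simpa using hsub (by simpa using hjj' : j ∈ ({i | i < j' ∧ τ i = τ j} : Finset (Fin t)))
  -- the `r`-th `true` goes to the last slot of the `r`-th block of `B`; each `false` goes to a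
  -- non-last slot of the block of the next `true`, indexed by the number of earlier `false`s
  let κ := B.orderEmbOfCardLe hB
  let h (j : Fin t) : Fin m ×ₗ Fin (t + 1) :=
    toLex (κ ⟨before true j, before_lt _ _⟩,
      if τ j then Fin.last t else Fin.castSucc ⟨before false j, before_lt _ _⟩)
  refine ⟨h, fun j j' hjj' => ?_, fun j => ?_⟩
  · rw [Prod.Lex.toLex_lt_toLex]
    cases hτ : τ j
    · rcases (before_mono true hjj'.le).lt_or_eq with hlt | heq
      · exact Or.inl (κ.strictMono hlt)
      · refine Or.inr ⟨by simp [heq], ?_⟩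
        have := before_strictMono hjj'
        rw [hτ] at this
        simp only [Bool.false_eq_true, if_false]
        split_ifs
        · exact Fin.castSucc_lt_last _
        · exact Fin.castSucc_lt_castSucc_iff.2 this
    · have := before_strictMono hjj'
      rw [hτ] at this
      exact Or.inl (κ.strictMono this)
  · cases hτ : τ j
    · simpa [h, hτ] using Fin.castSucc_ne_last (⟨before false j, before_lt _ _⟩ : Fin t)
    · simpa [h, hτ] using B.orderEmbOfCardLe_mem hB _

section Splitting

variable {X D₀ D₁ V V' : Set (ℤ → A)}

def RealizesPattern (X D₀ D₁ : Set (ℤ → A)) {t : ℕ} (g : Fin t → ℤ) (τ : Fin t → Bool) :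
    Prop :=
  ∃ x ∈ X, ∀ j, shiftZ (g j) x ∈ if τ j then D₁ else D₀

def IsIndepTuple (X D₀ D₁ : Set (ℤ → A)) {t : ℕ} (g : Fin t → ℤ) : Prop :=
  ∀ τ, RealizesPattern X D₀ D₁ g τ

theorem IsIndepTuple.isIndepFinset_image {t : ℕ} {g : Fin t → ℤ}
    (h : IsIndepTuple X D₀ D₁ g) : IsIndepFinset X D₀ D₁ (univ.image g) := fun σ =>
  let ⟨x, hx, hxg⟩ := h (σ ∘ g)
  ⟨x, hx, by simpa using hxg⟩

theorem exists_strictMono_pattern_of_grid {m t : ℕ} {C : Set (ℤ → A)}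
    {e : Fin m ×ₗ Fin (t + 1) → ℤ} {x : ℤ → A}
    (hD₀ : ∀ p, (ofLex p).2 ≠ Fin.last t → shiftZ (e p) x ∈ D₀) {B : Finset (Fin m)}
    (hB : t ≤ B.card) (hBC : ∀ b ∈ B, shiftZ (e (toLex (b, Fin.last t))) x ∈ C)
    (ρ : Fin t → Bool) :
    ∃ h : Fin t → Fin m ×ₗ Fin (t + 1), StrictMono h ∧
      ∀ j, shiftZ (e (h j)) x ∈ if ρ j then C else D₀ := by
  obtain ⟨h, hh, hhj⟩ := exists_strictMono_lex ρ hB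
  refine ⟨h, hh, fun j => ?_⟩
  obtain ⟨hlast, hfst⟩ := hhj j
  cases hρ : ρ j
  · simp only [hρ, Bool.false_eq_true, iff_false] at hlast
    exact hD₀ _ hlast
  · simp only [hρ, iff_true, forall_const] at hlast hfst
    have hhj : h j = toLex ((ofLex (h j)).1, Fin.last t) := by rw [← hlast]; rfl
    simp only [if_true]
    rw [hhj]
    exact hBC _ hfst

theorem IsIndepFinset.exists_realizesPattern_of_union {t : ℕ} {T : Finset ℤ}
    (h : IsIndepFinset X D₀ (V ∪ V') T) (hT : 2 * t * (t + 1) ≤ T.card) (ρ ρ' : Fin t → Bool) :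
    ∃ g : Fin t → ℤ, StrictMono g ∧ (∀ j, g j ∈ T) ∧
      (RealizesPattern X D₀ V g ρ ∨ RealizesPattern X D₀ V' g ρ') := by
  classical
  -- `2t` blocks of `t + 1` consecutive points of `T`; the last points of the blocks go to `V ∪ V'`
  let e : Fin (2 * t) ×ₗ Fin (t + 1) ↪o ℤ :=
    (monoEquivOfFin _ (by simp)).symm.toOrderEmbedding.trans (T.orderEmbOfCardLe hT)
  have heT (p) : e p ∈ T := orderEmbOfCardLe_mem _ _ _
  obtain ⟨x, hxX, hx⟩ := h fun i => decide (i ∈ univ.image fun b => e (toLex (b, Fin.last t)))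
  have hslot (p : Fin (2 * t) ×ₗ Fin (t + 1)) :
      shiftZ (e p) x ∈ if (ofLex p).2 = Fin.last t then V ∪ V' else D₀ := by
    have hmem : (e p ∈ univ.image fun b => e (toLex (b, Fin.last t))) ↔
        (ofLex p).2 = Fin.last t := by
      simp only [mem_image, mem_univ, true_and, e.injective.eq_iff]
      exact ⟨by rintro ⟨b, rfl⟩; rfl, fun h => ⟨(ofLex p).1, by rw [← h]; rfl⟩⟩
    simpa [hmem] using hx (e p) (heT p)
  have hD₀ (p) (hp : (ofLex p).2 ≠ Fin.last t) : shiftZ (e p) x ∈ D₀ := by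
    simpa [hp] using hslot p
  let B := univ.filter fun b => shiftZ (e (toLex (b, Fin.last t))) x ∈ V
  have hB : t ≤ B.card ∨ t ≤ Bᶜ.card := by
    have := card_compl B
    simp only [Fintype.card_fin] at this
    omega
  rcases hB with hB | hB
  · obtain ⟨h, hh, hhx⟩ :=
      exists_strictMono_pattern_of_grid hD₀ hB (fun b hb => (mem_filter.1 hb).2) ρ
    exact ⟨e ∘ h, e.strictMono.comp hh, fun _ => heT _, Or.inl ⟨x, hxX, hhx⟩⟩
  · obtain ⟨h, hh, hhx⟩ := exists_strictMono_pattern_of_grid hD₀ hB (fun b hb => by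
        have := hslot (toLex (b, Fin.last t))
        simp only [ofLex_toLex, if_true] at this
        exact this.resolve_left (by simpa [B] using hb)) ρ'
    exact ⟨e ∘ h, e.strictMono.comp hh, fun _ => heT _, Or.inr ⟨x, hxX, hhx⟩⟩

theorem HasLargeIndepSets.exists_isIndepTuple_of_union (h : HasLargeIndepSets X D₀ (V ∪ V'))
    (t : ℕ) : ∃ g : Fin t → ℤ, StrictMono g ∧ (IsIndepTuple X D₀ V g ∨ IsIndepTuple X D₀ V' g) := by
  by_contra! hbad
  have hpat (g : Fin t → ℤ) : ∃ τ τ' : Fin t → Bool, StrictMono g →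
      ¬RealizesPattern X D₀ V g τ ∧ ¬RealizesPattern X D₀ V' g τ' := by
    by_cases hg : StrictMono g
    · obtain ⟨⟨τ, hτ⟩, ⟨τ', hτ'⟩⟩ := And.imp not_forall.1 not_forall.1 (hbad g hg)
      exact ⟨τ, τ', fun _ => ⟨hτ, hτ'⟩⟩
    · exact ⟨fun _ => false, fun _ => false, fun h => absurd h hg⟩
  choose τ τ' hτ using hpat
  obtain ⟨R, hR⟩ :=
    exists_isRamseyBound (α := ℤ) t ((Fin t → Bool) × (Fin t → Bool)) (2 * t * (t + 1))
  obtain ⟨G, hRG, hG⟩ := h R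
  obtain ⟨T, hTG, hT, ⟨ρ, ρ'⟩, hhom⟩ := hR G (fun g => (τ g, τ' g)) hRG
  obtain ⟨g, hg, hgT, hgρ⟩ := (hG.subset hTG).exists_realizesPattern_of_union hT ρ ρ'
  obtain ⟨hρ, hρ'⟩ := Prod.mk.inj (hhom g hg hgT)
  rcases hgρ with hgρ | hgρ'
  · exact (hτ g hg).1 (hρ ▸ hgρ)
  · exact (hτ g hg).2 (hρ' ▸ hgρ')

theorem HasLargeIndepSets.or_of_union (h : HasLargeIndepSets X D₀ (V ∪ V')) :
    HasLargeIndepSets X D₀ V ∨ HasLargeIndepSets X D₀ V' := by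
  refine or_iff_not_imp_left.2 fun hV t => ?_
  obtain ⟨t₁, ht₁⟩ := not_forall.1 hV
  obtain ⟨g, hg, hgV⟩ := h.exists_isIndepTuple_of_union (max t t₁)
  have hcard : (univ.image g).card = max t t₁ := by
    rw [card_image_of_injective _ hg.injective, card_fin]
  rcases hgV with hgV | hgV'
  · exact absurd ⟨_, hcard.symm ▸ le_max_right t t₁, hgV.isIndepFinset_image⟩ ht₁
  · exact ⟨_, hcard.symm ▸ le_max_left t t₁, hgV'.isIndepFinset_image⟩

end Splitting

section INPairs

variable {X D₀ D₁ : Set (ℤ → A)}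

theorem HasLargeIndepSets.exists_of_iUnion {ι : Type*} [Finite ι] {E : ι → Set (ℤ → A)}
    (h : HasLargeIndepSets X D₀ (⋃ i, E i)) : ∃ i, HasLargeIndepSets X D₀ (E i) := by
  classical
  have := Fintype.ofFinite ι
  suffices ∀ s : Finset ι, HasLargeIndepSets X D₀ (⋃ i ∈ s, E i) →
      ∃ i ∈ s, HasLargeIndepSets X D₀ (E i) by
    obtain ⟨i, -, hi⟩ := this univ (by simpa using h)
    exact ⟨i, hi⟩
  intro s
  induction s using Finset.induction_on with
  | empty => intro h; simpa using h.nonempty_right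
  | insert a s _ ih =>
    intro h
    rw [set_biUnion_insert] at h
    rcases h.or_of_union with ha | hs
    · exact ⟨a, mem_insert_self a s, ha⟩
    · obtain ⟨i, hi, hi'⟩ := ih hs
      exact ⟨i, mem_insert_of_mem hi, hi'⟩

theorem HasLargeIndepSets.exists_inter_cylinder [Finite A] (h : HasLargeIndepSets X D₀ D₁)
    (F : Finset ℤ) :
    ∃ w₀ w₁ : ℤ → A, HasLargeIndepSets X (D₀ ∩ cylinder F w₀) (D₁ ∩ cylinder F w₁) := by
  have refine_right {D₀ D₁ : Set (ℤ → A)} (h : HasLargeIndepSets X D₀ D₁) :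
      ∃ w, HasLargeIndepSets X D₀ (D₁ ∩ cylinder F w) := by
    have hcover : D₁ ⊆ ⋃ v : F → A, D₁ ∩ F.restrict ⁻¹' {v} := fun y hy =>
      Set.mem_iUnion.2 ⟨F.restrict y, hy, rfl⟩
    obtain ⟨v, hv⟩ := (h.mono subset_rfl hcover).exists_of_iUnion
    obtain ⟨w, -, rfl⟩ := hv.nonempty_right
    exact ⟨w, hv⟩
  obtain ⟨w₁, h₁⟩ := refine_right h
  obtain ⟨w₀, h₀⟩ := refine_right h₁.symm
  exact ⟨w₀, w₁, h₀.symm⟩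

theorem isClosed_setOf_hasLargeIndepSets_inter_cylinder [TopologicalSpace A]
    [DiscreteTopology A] (F : Finset ℤ) :
    IsClosed {w : (ℤ → A) × (ℤ → A) |
      HasLargeIndepSets X (D₀ ∩ cylinder F w.1) (D₁ ∩ cylinder F w.2)} := by
  have hρ : Continuous fun w : (ℤ → A) × (ℤ → A) => (F.restrict w.1, F.restrict w.2) :=
    (F.continuous_restrict.comp continuous_fst).prodMk (F.continuous_restrict.comp continuous_snd)
  have := (isClosed_discrete {p : (F → A) × (F → A) |
    HasLargeIndepSets X (D₀ ∩ F.restrict ⁻¹' {p.1}) (D₁ ∩ F.restrict ⁻¹' {p.2})}).preimage hρ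
  exact this

theorem HasLargeIndepSets.exists_isINPair [Finite A] [TopologicalSpace A] [DiscreteTopology A]
    (h : HasLargeIndepSets X D₀ D₁) (hD₀ : D₀ ⊆ X) (hD₁ : D₁ ⊆ X) :
    ∃ x₀ ∈ closure D₀, ∃ x₁ ∈ closure D₁, IsINPair X x₀ x₁ := by
  let K (F : Finset ℤ) : Set ((ℤ → A) × (ℤ → A)) :=
    {w | HasLargeIndepSets X (D₀ ∩ cylinder F w.1) (D₁ ∩ cylinder F w.2)}
  have hK_closed : ∀ F, IsClosed (K F) := isClosed_setOf_hasLargeIndepSets_inter_cylinder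
  have hK_anti : Antitone K := fun F F' hF w hw =>
    hw.mono (Set.inter_subset_inter_right _ (cylinder_anti hF _))
      (Set.inter_subset_inter_right _ (cylinder_anti hF _))
  obtain ⟨⟨x₀, x₁⟩, hx⟩ := IsCompact.nonempty_iInter_of_directed_nonempty_isCompact_isClosed K
    hK_anti.directed_ge (fun F => let ⟨w₀, w₁, hw⟩ := h.exists_inter_cylinder F; ⟨(w₀, w₁), hw⟩)
    (fun F => (hK_closed F).isCompact) hK_closed
  have hxK (F : Finset ℤ) :
      HasLargeIndepSets X (D₀ ∩ cylinder F x₀) (D₁ ∩ cylinder F x₁) :=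
    Set.mem_iInter.1 hx F
  refine ⟨x₀, mem_closure_iff.2 fun U hU hxU => ?_, x₁, mem_closure_iff.2 fun U hU hxU => ?_,
    isINPair_iff.2 fun U₀ U₁ hU₀ hU₁ hx₀ hx₁ => ?_⟩
  · obtain ⟨F, hF⟩ := exists_cylinder_subset hU hxU
    obtain ⟨y, hyD, hyF⟩ := (hxK F).nonempty_left
    exact ⟨y, hF hyF, hyD⟩
  · obtain ⟨F, hF⟩ := exists_cylinder_subset hU hxU
    obtain ⟨y, hyD, hyF⟩ := (hxK F).nonempty_right
    exact ⟨y, hF hyF, hyD⟩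
  · obtain ⟨F₀, hF₀⟩ := exists_cylinder_subset hU₀ hx₀
    obtain ⟨F₁, hF₁⟩ := exists_cylinder_subset hU₁ hx₁
    exact (hxK (F₀ ∪ F₁)).mono
      (fun y ⟨hyD, hyF⟩ => ⟨hF₀ (cylinder_anti subset_union_left _ hyF), hD₀ hyD⟩)
      (fun y ⟨hyD, hyF⟩ => ⟨hF₁ (cylinder_anti subset_union_right _ hyF), hD₁ hyD⟩)

end INPairs

theorem isNullSystem_of_forall_not_hasAllPatternsAlong [TopologicalSpace A] [DiscreteTopology A]
    {X : Set (ℤ → A)} (hclosed : IsClosed X) (hinv : shiftZ 1 '' X = X)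
    (hmin : ∀ Y : Set (ℤ → A), Y ⊆ X → IsClosed Y → shiftZ 1 '' Y = Y → Y = ∅ ∨ Y = X)
    {t : ℕ} (ht : ∀ x ∈ X, ∀ a b : A, a ≠ b → ∀ G : Finset ℤ, G.card = t →
      ¬HasAllPatternsAlong x a b G) :
    IsNullSystem X := by
  intro x₀ hx₀ x₁ _ hIN
  by_contra hne
  obtain ⟨n, hn⟩ := Function.ne_iff.1 hne
  obtain ⟨G, htG, hG⟩ := isINPair_iff.1 hIN _ _ (isClopen_setOf_apply_eq n (x₀ n)).isOpen
    (isClopen_setOf_apply_eq n (x₁ n)).isOpen rfl rfl t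
  obtain ⟨G', hG'G, rfl⟩ := exists_subset_card_eq htG
  set H := G'.map (addLeftEmbedding n)
  refine ht x₀ hx₀ _ _ hn H (card_map _) fun u hu => ?_
  obtain ⟨z, hzX, hz⟩ :=
    ((hG.subset hG'G).mono Set.inter_subset_left Set.inter_subset_left).exists_mem_pattern
      (fun g => u (n + g)) fun g hg => hu _ (mem_map_of_mem _ hg)
  obtain ⟨i, hi⟩ := exists_shiftZ_mem_cylinder hclosed hinv hmin hx₀ hzX H
  refine ⟨i, ?_⟩
  simp only [H, forall_mem_map, addLeftEmbedding_apply]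
  intro g hg
  rw [add_comm, ← hz g hg]
  exact mem_cylinder.1 hi _ (mem_map_of_mem _ hg)

theorem exists_forall_of_antitone {β : Type*} [Finite β] {P : ℕ → β → Prop}
    (hP : ∀ b, Antitone (P · b)) (h : ∀ t, ∃ b, P t b) : ∃ b, ∀ t, P t b := by
  by_contra! hne
  choose T hT using hne
  have := Fintype.ofFinite β
  obtain ⟨b, hb⟩ := h (univ.sup T)
  exact hT b (hP b (le_sup (mem_univ b)) hb)

theorem IsNullSystem.exists_forall_not_hasAllPatternsAlong [Finite A] [TopologicalSpace A]
    [DiscreteTopology A] {X : Set (ℤ → A)} (hclosed : IsClosed X) (hinv : shiftZ 1 '' X = X)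
    (hnull : IsNullSystem X) :
    ∃ t : ℕ, ∀ x ∈ X, ∀ a b : A, a ≠ b → ∀ G : Finset ℤ, G.card = t →
      ¬HasAllPatternsAlong x a b G := by
  by_contra! hpat
  obtain ⟨⟨a, b⟩, hab⟩ := exists_forall_of_antitone (P := fun t (p : A × A) =>
      p.1 ≠ p.2 ∧ ∃ x ∈ X, ∃ G : Finset ℤ, t ≤ G.card ∧ HasAllPatternsAlong x p.1 p.2 G)
    (fun _ _ _ htt' ⟨hp, x, hx, G, hG, hxG⟩ => ⟨hp, x, hx, G, htt'.trans hG, hxG⟩)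
    (fun t => let ⟨x, hx, a, b, hab, G, hG, hxG⟩ := hpat t; ⟨(a, b), hab, x, hx, G, hG.ge, hxG⟩)
  have hlarge : HasLargeIndepSets X ({y | y 0 = a} ∩ X) ({y | y 0 = b} ∩ X) := fun t =>
    let ⟨_, x, hx, G, hG, hxG⟩ := hab t
    ⟨G, hG, hxG.isIndepFinset hinv hx⟩
  obtain ⟨x₀, hx₀, x₁, hx₁, hIN⟩ :=
    hlarge.exists_isINPair Set.inter_subset_right Set.inter_subset_right
  have hcl (c : A) : closure ({y : ℤ → A | y 0 = c} ∩ X) ⊆ {y | y 0 = c} ∩ X :=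
    closure_minimal subset_rfl ((isClopen_setOf_apply_eq 0 c).isClosed.inter hclosed)
  obtain ⟨rfl, hx₀X⟩ := hcl a hx₀
  obtain ⟨rfl, hx₁X⟩ := hcl b hx₁
  exact (hab 0).1 (congrFun (hnull x₀ hx₀X x₁ hx₁X hIN) 0)

end

theorem stmt10_general {A : Type*} [Fintype A]
    [TopologicalSpace A] [DiscreteTopology A]
    (X : Set (ℤ → A)) (hclosed : IsClosed X)
    (hinv : shiftZ 1 '' X = X)
    (hmin : ∀ Y : Set (ℤ → A), Y ⊆ X → IsClosed Y → shiftZ 1 '' Y = Y →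
      Y = ∅ ∨ Y = X) :
    IsNullSystem X ↔
      ∃ t : ℕ, ∀ x ∈ X, ∀ a b : A, a ≠ b → ∀ G : Finset ℤ, G.card = t →
        ¬ (∀ u : ℤ → A, (∀ g ∈ G, u g = a ∨ u g = b) →
            ∃ i : ℤ, ∀ g ∈ G, x (i + g) = u g) :=
  ⟨fun hnull => hnull.exists_forall_not_hasAllPatternsAlong hclosed hinv,
    fun ⟨_, ht⟩ => isNullSystem_of_forall_not_hasAllPatternsAlong hclosed hinv hmin ht⟩

/-- A minimal subshift `(X, T)` over a finite alphabet `A` is null if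
and only if there exists `t ∈ ℕ` such that for every `x ∈ X`, all distinct letters
`a, b ∈ A`, and every `G ⊂ ℤ` of size `t`, the set of patterns `L(x, G)` of `x` read
along `G` does not contain all of `{a,b}^t`. -/
theorem stmt10 {A : Type*} [Fintype A] [DecidableEq A]
    [TopologicalSpace A] [DiscreteTopology A]
    (X : Set (ℤ → A)) (hclosed : IsClosed X) (hne : X.Nonempty)
    (hinv : shiftZ 1 '' X = X)
    (hmin : ∀ Y : Set (ℤ → A), Y ⊆ X → IsClosed Y → shiftZ 1 '' Y = Y →
      Y = ∅ ∨ Y = X) :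
    IsNullSystem X ↔
      ∃ t : ℕ, ∀ x ∈ X, ∀ a b : A, a ≠ b → ∀ G : Finset ℤ, G.card = t →
        ¬ (∀ u : ℤ → A, (∀ g ∈ G, u g = a ∨ u g = b) →
            ∃ i : ℤ, ∀ g ∈ G, x (i + g) = u g) :=
  stmt10_general X hclosed hinv hmin
end

section
/- Let k ≥ 2 and let x ∈ A^ℤ be a sequence over a finite alphabet A such that for each m ≥ 1 at most one residue 0 ≤ j < k^m satisfies x_n = x_{j + k^m n} for all n ∈ ℤ, and such that the k-kernel of x is finite. If every element z of the k-kernel of x with z ≠ x is null, then x is null. -/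
/-- The `k`-kernel of a bi-infinite sequence `x`: all subsequences
`(x_{i + k^m n})_{n ∈ ℤ}` with `m ∈ ℕ` and `0 ≤ i < k^m`. -/
def kerSet {A : Type*} (k : ℕ) (x : ℤ → A) : Set (ℤ → A) :=
  {y | ∃ m : ℕ, ∃ i : ℕ, i < k ^ m ∧ y = fun n => x ((i : ℤ) + (k : ℤ) ^ m * n)}

/-- A sequence `y` is `t`-null if for all distinct letters `a, b` and every `G ⊆ ℤ` of
size `t`, not every `{a,b}`-valued pattern along `G` is realised in some shift of `y`. -/
def IsTNull {A : Type*} (y : ℤ → A) (t : ℕ) : Prop :=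
  ∀ a b : A, a ≠ b → ∀ G : Finset ℤ, G.card = t →
    ¬ (∀ u : ℤ → A, (∀ g ∈ G, u g = a ∨ u g = b) →
        ∃ i : ℤ, ∀ g ∈ G, y (i + g) = u g)

/-- A sequence is null if it is `t`-null for some `t`. -/
def IsNullSeq {A : Type*} (y : ℤ → A) : Prop := ∃ t : ℕ, IsTNull y t

/-!
Let `N` be the kernel elements other than `x`, all `T`-null for one `T`, and `θ = |N| T + 2`.
Take the largest `M` such that some residue class `C` of the window `G` modulo `k^M` has `θ`
points. Along `C` a shift of `x` reads a shift of a level-`M` decimation of `x` at the contracted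
positions `(g - ρ) / k^M`, and all these decimations except at most one (residue `J`) lie in `N`;
since `N` is finite, one pattern on the contracted class is avoided by all of them. If `G \ C` is
also large, the shifts that read residue `J` along `C` are defeated on `G \ C` instead: there each
point reads a fixed shift of a fixed member of `N`, and pigeonholing over `N` yields either `T`
points read from one `z ∈ N` at distinct positions, or two points that always carry the same
letter. Otherwise, by maximality of `M` the contracted class meets every residue class modulo `k`
in fewer than `θ` points, and the same pigeonhole argument, run for each residue of the shift on
disjoint parts of the class, gives a pattern avoided by `x` itself as well as by `N`.
-/

open Finset

section

variable {A : Type*}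

def IsPattern (a b : A) (u : ℤ → A) : Prop := ∀ g, u g = a ∨ u g = b

/-- `Avoids y Set.univ G u`: the pattern `u` restricted to `G` is not in `L(y, G)`. -/
def Avoids (y : ℤ → A) (P : Set ℤ) (S : Finset ℤ) (u : ℤ → A) : Prop :=
  ∀ i ∈ P, ∃ g ∈ S, y (i + g) ≠ u g

def decimate (x : ℤ → A) (q j : ℤ) : ℤ → A := fun n => x (j + q * n)

theorem IsPattern.piecewise {a b : A} {u v : ℤ → A} (hu : IsPattern a b u) (hv : IsPattern a b v)
    (S : Finset ℤ) : IsPattern a b (S.piecewise u v) := fun g => by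
  by_cases hg : g ∈ S
  · rw [S.piecewise_eq_of_mem _ _ hg]; exact hu g
  · rw [S.piecewise_eq_of_notMem _ _ hg]; exact hv g

namespace Avoids

variable {y : ℤ → A} {P P' : Set ℤ} {S S' : Finset ℤ} {u v : ℤ → A}

theorem mono (h : Avoids y P S u) (hS : S ⊆ S') : Avoids y P S' u := fun i hi =>
  let ⟨g, hg, hne⟩ := h i hi
  ⟨g, hS hg, hne⟩

theorem congr (h : Avoids y P S u) (huv : ∀ g ∈ S, u g = v g) : Avoids y P S v := fun i hi =>
  let ⟨g, hg, hne⟩ := h i hi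
  ⟨g, hg, huv g hg ▸ hne⟩

theorem union (h : Avoids y P S u) (h' : Avoids y P' S u) : Avoids y (P ∪ P') S u :=
  fun i hi => hi.elim (h i) (h' i)

theorem piecewise_left (h : Avoids y P S u) (hS : S ⊆ S') (v : ℤ → A) :
    Avoids y P S (S'.piecewise u v) :=
  h.congr fun _ hg => (S'.piecewise_eq_of_mem _ _ (hS hg)).symm

theorem piecewise_right (h : Avoids y P S v) (hS : Disjoint S' S) (u : ℤ → A) :
    Avoids y P S (S'.piecewise u v) :=
  h.congr fun _ hg => (S'.piecewise_eq_of_notMem _ _ (disjoint_right.1 hS hg)).symm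

end Avoids

section Null

variable {y : ℤ → A} {t : ℕ} {a b : A}

theorem IsTNull.exists_avoids (h : IsTNull y t) (hab : a ≠ b) {G : Finset ℤ} (hG : t ≤ G.card) :
    ∃ u, IsPattern a b u ∧ Avoids y Set.univ G u := by
  obtain ⟨G', hG'G, hG'⟩ := exists_subset_card_eq hG
  have hG'null := h a b hab G' hG'
  push Not at hG'null
  obtain ⟨u, hu, hyu⟩ := hG'null
  refine ⟨G'.piecewise u fun _ => a, fun g => ?_, ?_⟩
  · by_cases hg : g ∈ G'
    · rw [G'.piecewise_eq_of_mem _ _ hg]; exact hu g hg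
    · rw [G'.piecewise_eq_of_notMem _ _ hg]; exact Or.inl rfl
  · exact (Avoids.piecewise_left (fun i _ => hyu i) subset_rfl _).mono hG'G

theorem isTNull_of_forall_exists_avoids
    (h : ∀ a b : A, a ≠ b → ∀ G : Finset ℤ, G.card = t →
      ∃ u, IsPattern a b u ∧ Avoids y Set.univ G u) :
    IsTNull y t := by
  intro a b hab G hG hall
  obtain ⟨u, hu, hyu⟩ := h a b hab G hG
  obtain ⟨i, hi⟩ := hall u fun g _ => hu g
  obtain ⟨g, hg, hne⟩ := hyu i trivial
  exact hne (hi g hg)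

theorem IsTNull.mono {t' : ℕ} (h : IsTNull y t) (ht : t ≤ t') : IsTNull y t' :=
  isTNull_of_forall_exists_avoids fun _ _ hab _ hG => h.exists_avoids hab (hG ▸ ht)

theorem exists_isTNull_of_forall_isNullSeq (N : Finset (ℤ → A)) (h : ∀ z ∈ N, IsNullSeq z) :
    ∃ T, ∀ z ∈ N, IsTNull z T := by
  classical
  induction N using Finset.induction_on with
  | empty => exact ⟨0, by simp⟩
  | insert z N _ ih =>
    obtain ⟨t, ht⟩ := h z (mem_insert_self z N)
    obtain ⟨T, hT⟩ := ih fun z' hz' => h z' (mem_insert_of_mem hz')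
    refine ⟨max t T, fun z' hz' => ?_⟩
    rcases mem_insert.1 hz' with rfl | hz'
    · exact ht.mono (le_max_left _ _)
    · exact (hT z' hz').mono (le_max_right _ _)

end Null

section Patterns

variable {a b : A}

/-- The requirements `c ∈ F` are served one after another, each on its own block of `m` points
avoiding `B c`. -/
theorem exists_pattern_avoids_forall {ι : Type*} (F : Finset ι) (y : ι → ℤ → A)
    (P : ι → Set ℤ) (B : ι → Finset ℤ) (m n : ℕ) (hB : ∀ c ∈ F, (B c).card ≤ n) :
    ∀ V : Finset ℤ, (∀ c ∈ F, ∀ S ⊆ V, Disjoint S (B c) → m ≤ S.card →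
      ∃ u, IsPattern a b u ∧ Avoids (y c) (P c) S u) →
    F.card * m + n ≤ V.card → ∃ u, IsPattern a b u ∧ ∀ c ∈ F, Avoids (y c) (P c) V u := by
  classical
  induction F using Finset.induction_on with
  | empty => exact fun _ _ _ => ⟨fun _ => a, fun _ => Or.inl rfl, by simp⟩
  | insert c F hc ih =>
    intro V h hV
    rw [card_insert_of_notMem hc, add_one_mul] at hV
    have hm : m ≤ (V \ B c).card := by
      have := le_card_sdiff (B c) V
      have := hB c (mem_insert_self c F)
      omega
    obtain ⟨S, hSB, hS⟩ := exists_subset_card_eq hm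
    have hSV : S ⊆ V := hSB.trans sdiff_subset
    obtain ⟨u, hu, hyu⟩ := h c (mem_insert_self c F) S hSV
      (disjoint_of_subset_left hSB sdiff_disjoint) hS.ge
    obtain ⟨v, hv, hyv⟩ := ih (fun c' hc' => hB c' (mem_insert_of_mem hc')) (V \ S)
      (fun c' hc' S' hS' => h c' (mem_insert_of_mem hc') S' (hS'.trans sdiff_subset))
      (by rw [card_sdiff_of_subset hSV, hS]; omega)
    refine ⟨S.piecewise u v, hu.piecewise hv S, fun c' hc' => ?_⟩
    rcases mem_insert.1 hc' with rfl | hc'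
    · exact (hyu.piecewise_left subset_rfl v).mono hSV
    · exact ((hyv c' hc').piecewise_right disjoint_sdiff u).mono sdiff_subset

theorem exists_pattern_avoids_of_isTNull (hab : a ≠ b) {N : Finset (ℤ → A)} {T : ℕ}
    (hT : ∀ z ∈ N, IsTNull z T) {V : Finset ℤ} (hV : N.card * T ≤ V.card) :
    ∃ u, IsPattern a b u ∧ ∀ z ∈ N, Avoids z Set.univ V u :=
  exists_pattern_avoids_forall N id (fun _ => Set.univ) (fun _ => ∅) T 0 (by simp) V
    (fun z hz _ _ _ hS => (hT z hz).exists_avoids hab hS) (by simpa using hV)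

theorem exists_pattern_avoids_of_apply_eq (hab : a ≠ b) {y : ℤ → A} {P : Set ℤ} {S : Finset ℤ}
    {g g' : ℤ} (hg : g ∈ S) (hg' : g' ∈ S) (hne : g ≠ g')
    (hy : ∀ i ∈ P, y (i + g) = y (i + g')) : ∃ u, IsPattern a b u ∧ Avoids y P S u := by
  refine ⟨Function.update (fun _ => a) g' b, fun h => ?_, fun i hi => ?_⟩
  · by_cases h' : h = g' <;> simp [h']
  · by_cases hya : y (i + g) = a
    · exact ⟨g', hg', by simpa [← hy i hi, hya] using hab⟩
    · exact ⟨g, hg, by simpa [hne] using hya⟩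

theorem exists_pattern_avoids_of_translates (hab : a ≠ b) {N : Finset (ℤ → A)} {T : ℕ}
    (hT : ∀ z ∈ N, IsTNull z T) {y : ℤ → A} {P : Set ℤ} {S : Finset ℤ}
    (hS : N.card * (T - 1) < S.card) {seq : ℤ → ℤ → A} {pos time : ℤ → ℤ}
    (hseq : ∀ g ∈ S, seq g ∈ N) (hy : ∀ i ∈ P, ∀ g ∈ S, y (i + g) = seq g (time i + pos g)) :
    ∃ u, IsPattern a b u ∧ Avoids y P S u := by
  classical
  obtain ⟨z, hz, hF⟩ := exists_lt_card_fiber_of_mul_lt_card_of_maps_to hseq hS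
  set F := {g ∈ S | seq g = z}
  by_cases hinj : Set.InjOn pos F
  · obtain ⟨w, hw, hzw⟩ := (hT z hz).exists_avoids hab (G := F.image pos)
      (by rw [card_image_of_injOn hinj]; omega)
    refine ⟨w ∘ pos, fun g => hw _, fun i hi => ?_⟩
    obtain ⟨_, hp, hne⟩ := hzw (time i) trivial
    obtain ⟨g, hg, rfl⟩ := mem_image.1 hp
    obtain ⟨hgS, hgz⟩ := mem_filter.1 hg
    exact ⟨g, hgS, by rwa [hy i hi g hgS, hgz]⟩
  · rw [Set.InjOn] at hinj
    push Not at hinj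
    obtain ⟨g, hg, g', hg', hpos, hne⟩ := hinj
    rw [mem_coe, mem_filter] at hg hg'
    exact exists_pattern_avoids_of_apply_eq hab hg.1 hg'.1 hne fun i hi => by
      rw [hy i hi g hg.1, hy i hi g' hg'.1, hpos, hg.2, hg'.2]

end Patterns

section Decimation

variable {a b : A} {x : ℤ → A} {N : Finset (ℤ → A)} {T : ℕ}

theorem decimate_mem_kerSet (x : ℤ → A) {k m : ℕ} {j : ℤ} (h0 : 0 ≤ j) (h1 : j < (k : ℤ) ^ m) :
    decimate x ((k : ℤ) ^ m) j ∈ kerSet k x :=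
  ⟨m, j.toNat, by zify; rwa [Int.toNat_of_nonneg h0], by rw [Int.toNat_of_nonneg h0]; rfl⟩

theorem decimate_emod_mem {q J : ℤ} (hq : 0 < q)
    (hJ : ∀ j, 0 ≤ j → j < q → j ≠ J → decimate x q j ∈ N) {s : ℤ} (hs : ¬ q ∣ s - J) :
    decimate x q (s % q) ∈ N :=
  hJ _ (Int.emod_nonneg _ hq.ne') (Int.emod_lt_of_pos _ hq) fun h =>
    hs (Int.dvd_self_sub_of_emod_eq h)

theorem card_image_ediv_sub {q ρ : ℤ} {C : Finset ℤ} (hC : ∀ g ∈ C, q ∣ g - ρ) :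
    (C.image fun g => (g - ρ) / q).card = C.card :=
  card_image_of_injOn fun g hg g' hg' h =>
    sub_left_injective ((Int.ediv_left_inj (hC g hg) (hC g' hg')).1 h)

theorem card_filter_dvd_image_le {q ρ : ℤ} {C : Finset ℤ} (hC : ∀ g ∈ C, q ∣ g - ρ) (k r : ℤ) :
    {v ∈ C.image fun g => (g - ρ) / q | k ∣ v - r}.card ≤
      {g ∈ C | q * k ∣ g - (ρ + q * r)}.card := by
  rw [filter_image]
  refine card_image_le.trans (card_le_card fun g hg => ?_)
  rw [mem_filter] at hg ⊢
  refine ⟨hg.1, ?_⟩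
  have hgq : g - (ρ + q * r) = q * ((g - ρ) / q - r) := by
    linear_combination (Int.mul_ediv_cancel' (hC g hg.1)).symm
  rw [hgq]
  exact mul_dvd_mul_left q hg.2

theorem Avoids.of_decimate {q ρ : ℤ} {C : Finset ℤ} (hC : ∀ g ∈ C, q ∣ g - ρ) {P : Set ℤ}
    {w : ℤ → A}
    (hw : ∀ i ∈ P, Avoids (decimate x q ((i + ρ) % q)) Set.univ
      (C.image fun g => (g - ρ) / q) w) :
    Avoids x P C fun g => w ((g - ρ) / q) := by
  intro i hi
  obtain ⟨_, hv, hne⟩ := hw i hi ((i + ρ) / q) trivial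
  obtain ⟨g, hg, rfl⟩ := mem_image.1 hv
  have hig : (i + ρ) % q + q * ((i + ρ) / q + (g - ρ) / q) = i + g := by
    linear_combination Int.emod_add_mul_ediv (i + ρ) q + Int.mul_ediv_cancel' (hC g hg)
  exact ⟨g, hg, by rwa [decimate, hig] at hne⟩

theorem exists_pattern_avoids_residue (hab : a ≠ b) (hT : ∀ z ∈ N, IsTNull z T) {q c : ℤ}
    {S : Finset ℤ} (hS : N.card * (T - 1) < S.card)
    (hN : ∀ g ∈ S, decimate x q ((c + g) % q) ∈ N) :
    ∃ u, IsPattern a b u ∧ Avoids x {i | q ∣ i - c} S u :=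
  exists_pattern_avoids_of_translates hab hT hS hN (pos := fun g => (c + g) / q)
    (time := fun i => (i - c) / q) fun i hi g _ => by
      show x (i + g) = x ((c + g) % q + q * ((i - c) / q + (c + g) / q))
      congr 1
      linear_combination -Int.emod_add_mul_ediv (c + g) q - Int.mul_ediv_cancel' hi

theorem exists_pattern_avoids_of_split_class (hab : a ≠ b) (hT : ∀ z ∈ N, IsTNull z T)
    {q J ρ : ℤ} (hq : 0 < q) (hJ : ∀ j, 0 ≤ j → j < q → j ≠ J → decimate x q j ∈ N)
    {G : Finset ℤ} (hC : N.card * T ≤ {g ∈ G | q ∣ g - ρ}.card)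
    (hD : N.card * (T - 1) < {g ∈ G | ¬ q ∣ g - ρ}.card) :
    ∃ u, IsPattern a b u ∧ Avoids x Set.univ G u := by
  set C := {g ∈ G | q ∣ g - ρ}
  have hCρ : ∀ g ∈ C, q ∣ g - ρ := fun g hg => (mem_filter.1 hg).2
  obtain ⟨w, hw, hNw⟩ := exists_pattern_avoids_of_isTNull hab hT
    (V := C.image fun g => (g - ρ) / q) (by rwa [card_image_ediv_sub hCρ])
  obtain ⟨v, hv, hxv⟩ := exists_pattern_avoids_residue hab hT hD (c := J - ρ) fun g hg =>
    decimate_emod_mem hq hJ fun hd => (mem_filter.1 hg).2 (by convert hd using 1; ring)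
  have hxw : Avoids x {i | q ∣ i - (J - ρ)}ᶜ C fun g => w ((g - ρ) / q) :=
    Avoids.of_decimate hCρ fun i hi =>
      hNw _ (decimate_emod_mem hq hJ fun hd =>
        hi (show q ∣ i - (J - ρ) by convert hd using 1; ring))
  refine ⟨C.piecewise (fun g => w ((g - ρ) / q)) v, IsPattern.piecewise (fun _ => hw _) hv C, ?_⟩
  rw [← Set.union_compl_self {i | q ∣ i - (J - ρ)}]
  exact ((hxv.piecewise_right (disjoint_filter_filter_not G G _) _).mono (filter_subset _ _)).union
    ((hxw.piecewise_left subset_rfl _).mono (filter_subset _ _))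

theorem exists_pattern_avoids_of_small_classes (hab : a ≠ b) (hT : ∀ z ∈ N, IsTNull z T)
    {k : ℕ} (hk : 0 < k) {j₀ : ℤ} (hj₀ : ∀ j : ℤ, 0 ≤ j → j < k → j ≠ j₀ → decimate x k j ∈ N)
    {θ : ℕ} (hθ : N.card * T < θ) {V : Finset ℤ} (hV : (k + 2) * θ ≤ V.card)
    (hcls : ∀ r : ℤ, {v ∈ V | (k : ℤ) ∣ v - r}.card < θ) :
    ∃ w, IsPattern a b w ∧ Avoids x Set.univ V w ∧ ∀ z ∈ N, Avoids z Set.univ V w := by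
  have hk' : (0 : ℤ) < k := by exact_mod_cast hk
  have hθ' : N.card * (T - 1) < θ := (Nat.mul_le_mul_left _ (Nat.sub_le _ _)).trans_lt hθ
  rw [add_mul] at hV
  obtain ⟨S, hSV, hS⟩ := exists_subset_card_eq (show N.card * T ≤ V.card by nlinarith)
  obtain ⟨w₁, hw₁, hNw₁⟩ := exists_pattern_avoids_of_isTNull hab hT hS.ge
  obtain ⟨w₂, hw₂, hxw₂⟩ := exists_pattern_avoids_forall (Finset.Ico 0 (k : ℤ)) (fun _ => x)
    (fun c => {i | (k : ℤ) ∣ i - c}) (fun c => {g ∈ V | (k : ℤ) ∣ c + g - j₀}) θ (θ - 1)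
    (fun c _ => by
      rw [filter_congr fun g _ => by rw [show c + g - j₀ = g - (j₀ - c) by ring]]
      exact Nat.le_sub_one_of_lt (hcls _))
    (V \ S)
    (fun c _ S' hS' hdisj hS'card => exists_pattern_avoids_residue hab hT (by omega)
      fun g hg => decimate_emod_mem hk' hj₀ fun hd =>
        disjoint_left.1 hdisj hg (mem_filter.2 ⟨(hS'.trans sdiff_subset) hg, hd⟩))
    (by rw [Int.card_Ico, card_sdiff_of_subset hSV, hS]; simp; omega)
  have hxw₂' : Avoids x Set.univ (V \ S) w₂ := fun i _ =>
    hxw₂ (i % k) (mem_Ico.2 ⟨Int.emod_nonneg _ hk'.ne', Int.emod_lt_of_pos _ hk'⟩) i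
      Int.dvd_self_sub_emod
  exact ⟨S.piecewise w₁ w₂, hw₁.piecewise hw₂ S,
    (hxw₂'.piecewise_right disjoint_sdiff _).mono sdiff_subset,
    fun z hz => ((hNw₁ z hz).piecewise_left subset_rfl _).mono hSV⟩

end Decimation

theorem exists_maximal_level {k : ℕ} (hk : 2 ≤ k) {θ : ℕ} (hθ : 2 ≤ θ) {G : Finset ℤ}
    (hG : θ ≤ G.card) :
    ∃ (M : ℕ) (ρ : ℤ), θ ≤ {g ∈ G | (k : ℤ) ^ M ∣ g - ρ}.card ∧
      ∀ ρ' : ℤ, {g ∈ G | (k : ℤ) ^ (M + 1) ∣ g - ρ'}.card < θ := by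
  classical
  set Q : ℕ → Prop := fun m => ∃ ρ : ℤ, θ ≤ {g ∈ G | (k : ℤ) ^ m ∣ g - ρ}.card
  have hbound : ∃ m, ¬ Q (m + 1) := by
    set D := (G ×ˢ G).sup fun p => (p.1 - p.2).natAbs
    refine ⟨D, fun ⟨ρ, hρ⟩ => ?_⟩
    obtain ⟨g, hg, g', hg', hne⟩ := one_lt_card.1 (show 1 < _ from hρ.trans_lt' (by omega))
    rw [mem_filter] at hg hg'
    have hdvd : (k : ℤ) ^ (D + 1) ∣ g - g' := by
      simpa only [sub_sub_sub_cancel_right] using dvd_sub hg.2 hg'.2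
    have hle := Nat.le_of_dvd (Int.natAbs_pos.2 (sub_ne_zero.2 hne))
      (by simpa [Int.natAbs_pow] using Int.natAbs_dvd_natAbs.2 hdvd)
    have hD := le_sup (f := fun p : ℤ × ℤ => (p.1 - p.2).natAbs) (b := (g, g'))
      (mem_product.2 ⟨hg.1, hg'.1⟩)
    have hpow := Nat.lt_pow_self (n := D + 1) (by omega : 1 < k)
    simp only at hD
    omega
  obtain ⟨ρ, hρ⟩ : Q (Nat.find hbound) := by
    rcases h : Nat.find hbound with _ | M
    · exact ⟨0, by simpa using hG⟩
    · exact not_not.1 (Nat.find_min hbound (h ▸ Nat.lt_succ_self M))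
  exact ⟨_, ρ, hρ, fun ρ' => not_le.1 fun h => Nat.find_spec hbound ⟨ρ', h⟩⟩

theorem exists_pattern_avoids_of_decimate_mem {a b : A} (hab : a ≠ b) {N : Finset (ℤ → A)}
    {T : ℕ} (hT : ∀ z ∈ N, IsTNull z T) {x : ℤ → A} {k : ℕ} (hk : 2 ≤ k)
    (hN : ∀ (m : ℕ) (j : ℤ), 0 ≤ j → j < (k : ℤ) ^ m →
      decimate x ((k : ℤ) ^ m) j ≠ x → decimate x ((k : ℤ) ^ m) j ∈ N)
    (hlevel : ∀ m : ℕ, ∃ J : ℤ, ∀ j, 0 ≤ j → j < (k : ℤ) ^ m → j ≠ J →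
      decimate x ((k : ℤ) ^ m) j ∈ N)
    {G : Finset ℤ} (hG : (k + 3) * (N.card * T + 2) ≤ G.card) :
    ∃ u, IsPattern a b u ∧ Avoids x Set.univ G u := by
  -- `2 ≤ θ` makes a maximal level exist, `N.card * T < θ` feeds both pigeonhole arguments.
  set θ := N.card * T + 2
  have hθ : (k + 3) * θ = (k + 2) * θ + θ := by ring
  obtain ⟨M, ρ, hC, hmax⟩ := exists_maximal_level hk (by omega) (show θ ≤ G.card by nlinarith)
  have hq : (0 : ℤ) < (k : ℤ) ^ M := by positivity
  obtain ⟨J, hJ⟩ := hlevel M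
  by_cases hD : θ ≤ {g ∈ G | ¬ (k : ℤ) ^ M ∣ g - ρ}.card
  · exact exists_pattern_avoids_of_split_class hab hT hq hJ (ρ := ρ) (by omega)
      ((Nat.mul_le_mul_left _ (Nat.sub_le _ _)).trans_lt (by omega))
  set C := {g ∈ G | (k : ℤ) ^ M ∣ g - ρ}
  have hCρ : ∀ g ∈ C, (k : ℤ) ^ M ∣ g - ρ := fun g hg => (mem_filter.1 hg).2
  have hCD : C.card + _ = G.card := card_filter_add_card_filter_not (s := G) _
  obtain ⟨j₀, hj₀⟩ := hlevel 1
  obtain ⟨w, hw, hxw, hNw⟩ := exists_pattern_avoids_of_small_classes hab hT (by omega)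
    (by simpa using hj₀) (θ := θ) (by omega) (V := C.image fun g => (g - ρ) / (k : ℤ) ^ M)
    (by rw [card_image_ediv_sub hCρ]; omega)
    fun r => (card_filter_dvd_image_le hCρ k r).trans_lt ((card_le_card fun g hg => by
      rw [mem_filter, mem_filter] at hg
      exact mem_filter.2 ⟨hg.1.1, pow_succ (k : ℤ) M ▸ hg.2⟩).trans_lt
        (hmax (ρ + (k : ℤ) ^ M * r)))
  refine ⟨_, fun _ => hw _, (Avoids.of_decimate hCρ fun i _ => ?_).mono (filter_subset _ _)⟩
  by_cases hx : decimate x ((k : ℤ) ^ M) ((i + ρ) % (k : ℤ) ^ M) = x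
  · rw [hx]; exact hxw
  · exact hNw _ (hN M _ (Int.emod_nonneg _ hq.ne') (Int.emod_lt_of_pos _ hq) hx)

theorem exists_residue_forall_decimate_mem {x : ℤ → A} {k : ℕ} {N : Finset (ℤ → A)}
    (huniq : ∀ m : ℕ, 1 ≤ m → ∀ j j' : ℕ, j < k ^ m → j' < k ^ m →
      (∀ n : ℤ, x n = x ((j : ℤ) + (k : ℤ) ^ m * n)) →
      (∀ n : ℤ, x n = x ((j' : ℤ) + (k : ℤ) ^ m * n)) → j = j')
    (hN : ∀ (m : ℕ) (j : ℤ), 0 ≤ j → j < (k : ℤ) ^ m →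
      decimate x ((k : ℤ) ^ m) j ≠ x → decimate x ((k : ℤ) ^ m) j ∈ N) (m : ℕ) :
    ∃ J : ℤ, ∀ j, 0 ≤ j → j < (k : ℤ) ^ m → j ≠ J → decimate x ((k : ℤ) ^ m) j ∈ N := by
  by_cases h : ∃ J, 0 ≤ J ∧ J < (k : ℤ) ^ m ∧ decimate x ((k : ℤ) ^ m) J = x
  · obtain ⟨J, hJ0, hJ, hJx⟩ := h
    refine ⟨J, fun j hj0 hj hne => hN m j hj0 hj fun hjx => hne ?_⟩
    rcases Nat.eq_zero_or_pos m with rfl | hm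
    · simp only [pow_zero] at hj hJ
      omega
    · have hcast : ∀ i : ℤ, 0 ≤ i → i < (k : ℤ) ^ m → i.toNat < k ^ m := fun i hi0 hi => by
        zify; rwa [Int.toNat_of_nonneg hi0]
      have := huniq m hm j.toNat J.toNat (hcast j hj0 hj) (hcast J hJ0 hJ)
        (fun n => by rw [Int.toNat_of_nonneg hj0]; exact (congrFun hjx n).symm)
        (fun n => by rw [Int.toNat_of_nonneg hJ0]; exact (congrFun hJx n).symm)
      omega
  · push Not at h
    exact ⟨0, fun j hj0 hj _ => hN m j hj0 hj (h j hj0 hj)⟩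

end

theorem stmt11_general {A : Type*} (k : ℕ) (hk : 2 ≤ k) (x : ℤ → A)
    (hker : (kerSet k x).Finite)
    (huniq : ∀ m : ℕ, 1 ≤ m → ∀ j j' : ℕ, j < k ^ m → j' < k ^ m →
      (∀ n : ℤ, x n = x ((j : ℤ) + (k : ℤ) ^ m * n)) →
      (∀ n : ℤ, x n = x ((j' : ℤ) + (k : ℤ) ^ m * n)) → j = j')
    (hnull : ∀ z ∈ kerSet k x, z ≠ x → IsNullSeq z) :
    IsNullSeq x := by
  classical
  set N := hker.toFinset.erase x
  obtain ⟨T, hT⟩ := exists_isTNull_of_forall_isNullSeq N fun z hz =>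
    hnull z (hker.mem_toFinset.1 (mem_of_mem_erase hz)) (ne_of_mem_erase hz)
  have hN : ∀ (m : ℕ) (j : ℤ), 0 ≤ j → j < (k : ℤ) ^ m →
      decimate x ((k : ℤ) ^ m) j ≠ x → decimate x ((k : ℤ) ^ m) j ∈ N := fun _ _ h0 h1 hne =>
    mem_erase.2 ⟨hne, hker.mem_toFinset.2 (decimate_mem_kerSet x h0 h1)⟩
  exact ⟨(k + 3) * (N.card * T + 2), isTNull_of_forall_exists_avoids fun _ _ hab _ hG =>
    exists_pattern_avoids_of_decimate_mem hab hT hk hN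
      (exists_residue_forall_decimate_mem huniq hN) hG.ge⟩

/-- Let `k ≥ 2` and let `x ∈ A^ℤ` be a sequence over a finite alphabet
with finite `k`-kernel such that for each `m ≥ 1` at most one residue `0 ≤ j < k^m`
satisfies `x_n = x_{j + k^m n}` for all `n ∈ ℤ`.  If every element `z ≠ x` of the
`k`-kernel of `x` is null, then `x` is null. -/
theorem stmt11 {A : Type*} [Fintype A] (k : ℕ) (hk : 2 ≤ k) (x : ℤ → A)
    (hker : (kerSet k x).Finite)
    (huniq : ∀ m : ℕ, 1 ≤ m → ∀ j j' : ℕ, j < k ^ m → j' < k ^ m →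
      (∀ n : ℤ, x n = x ((j : ℤ) + (k : ℤ) ^ m * n)) →
      (∀ n : ℤ, x n = x ((j' : ℤ) + (k : ℤ) ^ m * n)) → j = j')
    (hnull : ∀ z ∈ kerSet k x, z ≠ x → IsNullSeq z) :
    IsNullSeq x :=
  stmt11_general k hk x hker huniq hnull
end
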